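/- arXiv:2405.20028 — 14 statements merged into one kernel-verified Lean document; each statement's English description precedes it below -/
import Mathlib

section
/- Let T be a positive integer, let 𝒯 ⊆ {1,…,T}, and let (x_t)_{t∈𝒯} be a family of non-negative real numbers. Then ∑_{t∈𝒯} x_t / (∑_{s∈𝒯, s≤t} x_s)^{1/3} ≤ (3/2) (∑_{t∈𝒯} x_t)^{2/3}, where any summand whose numerator x_t equals 0 is interpreted as 0. -/
/-!
Adding the terms in increasing order of `t` makes the left-hand side telescope: with
`S_t = ∑_{s ≤ t} x_s`, concavity of `y ↦ y ^ (2/3)` (in the form of weighted AM-GM) gives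
`(2/3) x_t / S_t ^ (1/3) ≤ S_t ^ (2/3) - (S_t - x_t) ^ (2/3)`.
-/

open Finset

namespace Real

theorem mul_div_rpow_le_rpow_add_sub_rpow {p a b : ℝ} (hp₀ : 0 ≤ p) (hp₁ : p ≤ 1) (ha : 0 ≤ a)
    (hb : 0 ≤ b) : p * (a / (a + b) ^ (1 - p)) ≤ (a + b) ^ p - b ^ p := by
  rcases (add_nonneg ha hb).eq_or_lt with hab | hab
  · obtain rfl : a = 0 := by linarith
    simp
  rw [← mul_div_assoc, div_le_iff₀ (rpow_pos_of_pos hab _), sub_mul]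
  have hamgm : b ^ p * (a + b) ^ (1 - p) ≤ p * b + (1 - p) * (a + b) :=
    geom_mean_le_arith_mean2_weighted hp₀ (by linarith) hb hab.le (by ring)
  have hsplit : (a + b) ^ p * (a + b) ^ (1 - p) = a + b := by
    rw [← rpow_add hab, add_sub_cancel, rpow_one]
  linarith

end Real

theorem Finset.mul_sum_div_rpow_partial_sum_le {α : Type*} [LinearOrder α] (s : Finset α)
    (x : α → ℝ) (hx : ∀ t ∈ s, 0 ≤ x t) {p : ℝ} (hp₀ : 0 ≤ p) (hp₁ : p ≤ 1) :
    p * ∑ t ∈ s, x t / (∑ u ∈ s.filter (fun u => u ≤ t), x u) ^ (1 - p)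
      ≤ (∑ t ∈ s, x t) ^ p := by
  induction s using Finset.induction_on_max with
  | empty => simp [Real.zero_rpow_nonneg]
  | insert a s hmax ih =>
    have ha : a ∉ s := fun h => (hmax a h).false
    have hxs : ∀ t ∈ s, 0 ≤ x t := fun t ht => hx t (mem_insert_of_mem ht)
    have hfilter_a : (insert a s).filter (fun u => u ≤ a) = insert a s :=
      filter_true_of_mem fun u hu => (mem_insert.1 hu).elim le_of_eq fun hu => (hmax u hu).le
    have hfilter_s : ∀ t ∈ s,
        (insert a s).filter (fun u => u ≤ t) = s.filter (fun u => u ≤ t) := fun t ht => by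
      rw [filter_insert, if_neg (hmax t ht).not_ge]
    have hrest : ∑ t ∈ s, x t / (∑ u ∈ (insert a s).filter (fun u => u ≤ t), x u) ^ (1 - p)
        = ∑ t ∈ s, x t / (∑ u ∈ s.filter (fun u => u ≤ t), x u) ^ (1 - p) :=
      sum_congr rfl fun t ht => by rw [hfilter_s t ht]
    rw [sum_insert ha, hfilter_a, hrest, sum_insert ha, mul_add]
    have hstep := Real.mul_div_rpow_le_rpow_add_sub_rpow hp₀ hp₁ (hx a (mem_insert_self a s))
      (sum_nonneg hxs)
    linarith [ih hxs]

theorem stmt_0_general (𝒯 : Finset ℕ)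
    (x : ℕ → ℝ) (hx : ∀ t ∈ 𝒯, 0 ≤ x t) :
    ∑ t ∈ 𝒯, x t / (∑ s ∈ 𝒯.filter (fun s => s ≤ t), x s) ^ ((1 : ℝ) / 3)
      ≤ 3 / 2 * (∑ t ∈ 𝒯, x t) ^ ((2 : ℝ) / 3) := by
  have h := 𝒯.mul_sum_div_rpow_partial_sum_le x hx (p := 2 / 3) (by norm_num) (by norm_num)
  rw [show (1 : ℝ) - 2 / 3 = 1 / 3 by norm_num] at h
  linarith

theorem stmt_0 (T : ℕ) (hT : 1 ≤ T) (𝒯 : Finset ℕ) (h𝒯 : 𝒯 ⊆ Finset.Icc 1 T)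
    (x : ℕ → ℝ) (hx : ∀ t ∈ 𝒯, 0 ≤ x t) :
    ∑ t ∈ 𝒯, x t / (∑ s ∈ 𝒯.filter (fun s => s ≤ t), x s) ^ ((1 : ℝ) / 3)
      ≤ 3 / 2 * (∑ t ∈ 𝒯, x t) ^ ((2 : ℝ) / 3) :=
  stmt_0_general 𝒯 x hx
end

section
/- Let T be a positive integer, let z_1,…,z_T ≥ 0 and h_1,…,h_T > 0 be real sequences, and let h_max = max_{t∈[T]} h_t. Let J ≥ 0 be an integer and let θ_0 > θ_1 > … > θ_J > θ_{J+1} = 0 be reals with θ_0 ≥ h_max. Define 𝒯_j = {t ∈ [T] : θ_{j−1} ≥ h_t > θ_j} for j ∈ {1,…,J} and 𝒯_{J+1} = {t ∈ [T] : θ_J ≥ h_t}. Then G1(z_{1:T}, h_{1:T}) ≤ (3/2) ∑_{j=1}^{J+1} ( √(θ_{j−1}) · ∑_{t∈𝒯_j} √(z_t) )^{2/3}. -/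
/-!
Split `[T]` into the buckets `𝒯_j`, on which `h_t ≤ θ_{j-1}`. For `t ∈ 𝒯_j` the denominator of
the `t`-th summand of `G1` is at least `A_t / θ_{j-1}`, where `A_t` is the partial sum of `√z_s`
over `s ∈ 𝒯_j`, `s ≤ t`; so the bucket contributes at most
`θ_{j-1}^{1/3} ∑_t (A_t - A_{t-1}) / A_t^{1/3}`. By concavity of `u ↦ u^{2/3}` each term is at
most `3/2 (A_t^{2/3} - A_{t-1}^{2/3})`, and the sum telescopes. Every `t` lies in some bucket
(the one of the first `j` with `θ_j < h_t`) and the summands are nonnegative, so `G1` is at most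
the sum of the bucket contributions.
-/

open Finset

/-- `G1(z_{1:T}, h_{1:T}) = ∑_{t=1}^T √(z_t) / (∑_{s=1}^t √(z_s)/h_s)^{1/3}`,
where a summand with numerator `0` is interpreted as `0` (Lean's division by zero
convention handles this). -/
noncomputable def G1 (T : ℕ) (z h : ℕ → ℝ) : ℝ :=
  ∑ t ∈ Finset.Icc 1 T,
    Real.sqrt (z t) / (∑ s ∈ Finset.Icc 1 t, Real.sqrt (z s) / h s) ^ ((1 : ℝ) / 3)

open Real

namespace Finset

variable {ι α β : Type*} [DecidableEq α] [AddCommMonoid β] [PartialOrder β]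
  [IsOrderedAddMonoid β] {g : α → β}

theorem sum_union_le_of_nonneg {A C : Finset α} (hg : ∀ x ∈ A ∩ C, 0 ≤ g x) :
    ∑ x ∈ A ∪ C, g x ≤ ∑ x ∈ A, g x + ∑ x ∈ C, g x := by
  rw [← sum_union_inter]
  exact le_add_of_nonneg_right (sum_nonneg hg)

theorem sum_biUnion_le_of_nonneg {I : Finset ι} {B : ι → Finset α}
    (hg : ∀ i ∈ I, ∀ x ∈ B i, 0 ≤ g x) :
    ∑ x ∈ I.biUnion B, g x ≤ ∑ i ∈ I, ∑ x ∈ B i, g x := by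
  classical
  induction I using Finset.induction_on with
  | empty => simp
  | insert i I hi ih =>
    rw [biUnion_insert, sum_insert hi]
    calc ∑ x ∈ B i ∪ I.biUnion B, g x
        ≤ ∑ x ∈ B i, g x + ∑ x ∈ I.biUnion B, g x :=
          sum_union_le_of_nonneg fun x hx => hg i (mem_insert_self i I) x (mem_inter.1 hx).1
      _ ≤ ∑ x ∈ B i, g x + ∑ j ∈ I, ∑ x ∈ B j, g x :=
          add_le_add_right (ih fun j hj => hg j (mem_insert_of_mem hj)) _

end Finset

theorem exists_mem_Icc_le_sub_one_and_lt {β : Type*} [LinearOrder β] {θ : ℕ → β} {x : β}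
    (h0 : x ≤ θ 0) : ∀ J, θ J < x → ∃ j ∈ Icc 1 J, x ≤ θ (j - 1) ∧ θ j < x
  | 0, hJ => absurd h0 (not_le.2 hJ)
  | J + 1, hJ => by
    by_cases hx : θ J < x
    · obtain ⟨j, hj, hjx⟩ := exists_mem_Icc_le_sub_one_and_lt h0 J hx
      exact ⟨j, Icc_subset_Icc_right J.le_succ hj, hjx⟩
    · exact ⟨J + 1, right_mem_Icc.2 J.succ_pos, not_lt.1 hx, hJ⟩

/-- Tangent-line bound for the concave map `u ↦ u ^ p` at `y`. -/
theorem sub_div_rpow_le_sub_rpow {p x y : ℝ} (hp0 : 0 < p) (hp1 : p ≤ 1) (hx : 0 ≤ x)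
    (hxy : x ≤ y) :
    (y - x) / y ^ (1 - p) ≤ 1 / p * (y ^ p - x ^ p) := by
  rcases (hx.trans hxy).eq_or_lt with rfl | hy
  · obtain rfl : x = 0 := le_antisymm hxy hx
    simp
  rw [div_le_iff₀ (rpow_pos_of_pos hy _)]
  have amgm : x ^ p * y ^ (1 - p) ≤ p * x + (1 - p) * y :=
    geom_mean_le_arith_mean2_weighted hp0.le (by linarith) hx hy.le (by ring)
  have hyy : y ^ p * y ^ (1 - p) = y := by rw [← rpow_add hy]; simp
  calc y - x = 1 / p * (y - (p * x + (1 - p) * y)) := by field_simp; ring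
    _ ≤ 1 / p * (y - x ^ p * y ^ (1 - p)) := by gcongr
    _ = 1 / p * (y ^ p - x ^ p) * y ^ (1 - p) := by rw [mul_assoc, sub_mul, hyy]

theorem sum_div_rpow_partialSum_le {α : Type*} [LinearOrder α] {p : ℝ} (hp0 : 0 < p)
    (hp1 : p ≤ 1) (a : α → ℝ) (S : Finset α) (ha : ∀ t ∈ S, 0 ≤ a t) :
    ∑ t ∈ S, a t / (∑ s ∈ S with s ≤ t, a s) ^ (1 - p) ≤ 1 / p * (∑ t ∈ S, a t) ^ p := by
  induction S using Finset.induction_on_max with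
  | empty => simp [zero_rpow hp0.ne']
  | insert m S hmax ih =>
    have hm : m ∉ S := fun h => lt_irrefl m (hmax m h)
    have hfilter_m : {s ∈ insert m S | s ≤ m} = insert m S :=
      filter_true_of_mem fun s hs => (mem_insert.1 hs).elim le_of_eq fun h => (hmax s h).le
    have hfilter : ∑ t ∈ S, a t / (∑ s ∈ insert m S with s ≤ t, a s) ^ (1 - p) =
        ∑ t ∈ S, a t / (∑ s ∈ S with s ≤ t, a s) ^ (1 - p) := sum_congr rfl fun t ht => by
      rw [filter_insert, if_neg (not_le.2 (hmax t ht))]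
    have hS : 0 ≤ ∑ t ∈ S, a t := sum_nonneg fun t ht => ha t (mem_insert_of_mem ht)
    have hlast := sub_div_rpow_le_sub_rpow hp0 hp1 hS
      (le_add_of_nonneg_left (ha m (mem_insert_self m S)))
    rw [add_sub_cancel_right] at hlast
    rw [sum_insert hm, sum_insert hm, hfilter_m, sum_insert hm, hfilter]
    linarith [ih fun t ht => ha t (mem_insert_of_mem ht)]

theorem div_rpow_le_mul_div_rpow {q a P c D : ℝ} (hq : 0 ≤ q) (ha : 0 ≤ a) (haP : a ≤ P)
    (hP : P ≤ c * D) (hc : 0 ≤ c) : a / D ^ q ≤ c ^ q * (a / P ^ q) := by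
  rcases ha.eq_or_lt with rfl | ha
  · simp
  have hPpos : 0 < P := ha.trans_le haP
  have hD : 0 < D := pos_of_mul_pos_right (hPpos.trans_le hP) hc
  have hc : 0 < c := pos_of_mul_pos_left (hPpos.trans_le hP) hD.le
  calc a / D ^ q = c ^ q * (a / (c * D) ^ q) := by
        rw [mul_rpow hc.le hD.le]; field_simp
    _ ≤ c ^ q * (a / P ^ q) := by gcongr

noncomputable def G1Term (z h : ℕ → ℝ) (t : ℕ) : ℝ :=
  √(z t) / (∑ s ∈ Icc 1 t, √(z s) / h s) ^ ((1 : ℝ) / 3)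

theorem G1_eq_sum_G1Term (T : ℕ) (z h : ℕ → ℝ) : G1 T z h = ∑ t ∈ Icc 1 T, G1Term z h t := rfl

section Bucket

variable {T : ℕ} {z h : ℕ → ℝ} (hh : ∀ t ∈ Icc 1 T, 0 < h t)
include hh

theorem G1Term_nonneg {t : ℕ} (ht : t ∈ Icc 1 T) : 0 ≤ G1Term z h t :=
  div_nonneg (sqrt_nonneg _) <| rpow_nonneg (sum_nonneg fun s hs =>
    div_nonneg (sqrt_nonneg _) (hh s (Icc_subset_Icc_right (mem_Icc.1 ht).2 hs)).le) _

theorem sum_sqrt_le_mul_sum_sqrt_div {S : Finset ℕ} (hS : S ⊆ Icc 1 T) {c : ℝ}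
    (hc : ∀ t ∈ S, h t ≤ c) {t : ℕ} (ht : t ∈ S) :
    ∑ s ∈ S with s ≤ t, √(z s) ≤ c * ∑ s ∈ Icc 1 t, √(z s) / h s := by
  have htT := mem_Icc.1 (hS ht)
  have hpos : ∀ s ∈ Icc 1 t, 0 < h s := fun s hs => hh s (Icc_subset_Icc_right htT.2 hs)
  have hc0 : 0 ≤ c := (hh t (hS ht)).le.trans (hc t ht)
  rw [mul_sum]
  calc ∑ s ∈ S with s ≤ t, √(z s) ≤ ∑ s ∈ S with s ≤ t, c * (√(z s) / h s) := by
        refine sum_le_sum fun s hs => ?_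
        obtain ⟨hsS, -⟩ := mem_filter.1 hs
        have hs : 0 < h s := hh s (hS hsS)
        rw [mul_div_assoc', le_div_iff₀ hs, mul_comm]
        exact mul_le_mul_of_nonneg_right (hc s hsS) (sqrt_nonneg _)
    _ ≤ ∑ s ∈ Icc 1 t, c * (√(z s) / h s) := by
        refine sum_le_sum_of_subset_of_nonneg (fun s hs => ?_) fun s hs _ => ?_
        · obtain ⟨hsS, hst⟩ := mem_filter.1 hs
          exact mem_Icc.2 ⟨(mem_Icc.1 (hS hsS)).1, hst⟩
        · exact mul_nonneg hc0 (div_nonneg (sqrt_nonneg _) (hpos s hs).le)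

theorem sum_G1Term_le {S : Finset ℕ} (hS : S ⊆ Icc 1 T) {c : ℝ} (hc : ∀ t ∈ S, h t ≤ c) :
    ∑ t ∈ S, G1Term z h t ≤ 3 / 2 * (√c * ∑ t ∈ S, √(z t)) ^ ((2 : ℝ) / 3) := by
  rcases S.eq_empty_or_nonempty with rfl | ⟨t₀, ht₀⟩
  · simp [zero_rpow]
  have hc0 : 0 ≤ c := (hh t₀ (hS ht₀)).le.trans (hc t₀ ht₀)
  have hW : 0 ≤ ∑ t ∈ S, √(z t) := sum_nonneg fun t _ => sqrt_nonneg _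
  have htelescope := sum_div_rpow_partialSum_le (p := 2 / 3) (by norm_num) (by norm_num)
    (fun t => √(z t)) S fun t _ => sqrt_nonneg _
  rw [show (1 : ℝ) - 2 / 3 = 1 / 3 by norm_num, show (1 : ℝ) / (2 / 3) = 3 / 2 by norm_num]
    at htelescope
  calc ∑ t ∈ S, G1Term z h t
      ≤ ∑ t ∈ S, c ^ ((1 : ℝ) / 3) * (√(z t) / (∑ s ∈ S with s ≤ t, √(z s)) ^ ((1 : ℝ) / 3)) :=
        sum_le_sum fun t ht => div_rpow_le_mul_div_rpow (by norm_num) (sqrt_nonneg _)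
          (single_le_sum (f := fun s => √(z s)) (fun s _ => sqrt_nonneg _)
            (mem_filter.2 ⟨ht, le_rfl⟩))
          (sum_sqrt_le_mul_sum_sqrt_div hh hS hc ht) hc0
    _ ≤ c ^ ((1 : ℝ) / 3) * (3 / 2 * (∑ t ∈ S, √(z t)) ^ ((2 : ℝ) / 3)) := by
        rw [← mul_sum]
        exact mul_le_mul_of_nonneg_left htelescope (rpow_nonneg hc0 _)
    _ = 3 / 2 * (√c * ∑ t ∈ S, √(z t)) ^ ((2 : ℝ) / 3) := by
        rw [mul_rpow (sqrt_nonneg c) hW, sqrt_eq_rpow, ← rpow_mul hc0]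
        ring_nf

end Bucket

theorem stmt_1_general (T : ℕ) (z h : ℕ → ℝ)
    (hh : ∀ t ∈ Finset.Icc 1 T, 0 < h t)
    (J : ℕ) (θ : ℕ → ℝ)
    (hθ0 : ∀ t ∈ Finset.Icc 1 T, h t ≤ θ 0) :
    G1 T z h ≤
      3 / 2 *
        ((∑ j ∈ Finset.Icc 1 J,
            (Real.sqrt (θ (j - 1)) *
              ∑ t ∈ (Finset.Icc 1 T).filter (fun t => h t ≤ θ (j - 1) ∧ θ j < h t),
                Real.sqrt (z t)) ^ ((2 : ℝ) / 3))
          + (Real.sqrt (θ J) *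
              ∑ t ∈ (Finset.Icc 1 T).filter (fun t => h t ≤ θ J),
                Real.sqrt (z t)) ^ ((2 : ℝ) / 3)) := by
  set bucket := fun j => (Icc 1 T).filter (fun t => h t ≤ θ (j - 1) ∧ θ j < h t)
  set last := (Icc 1 T).filter (fun t => h t ≤ θ J)
  have hcover : Icc 1 T = (Icc 1 J).biUnion bucket ∪ last := by
    refine Subset.antisymm (fun t ht => ?_) (union_subset (biUnion_subset.2 fun j _ =>
      filter_subset _ _) (filter_subset _ _))
    by_cases hJ : θ J < h t
    · obtain ⟨j, hj, hjt⟩ := exists_mem_Icc_le_sub_one_and_lt (hθ0 t ht) J hJ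
      exact mem_union_left _ (mem_biUnion.2 ⟨j, hj, mem_filter.2 ⟨ht, hjt⟩⟩)
    · exact mem_union_right _ (mem_filter.2 ⟨ht, not_lt.1 hJ⟩)
  calc G1 T z h = ∑ t ∈ (Icc 1 J).biUnion bucket ∪ last, G1Term z h t := by
        rw [G1_eq_sum_G1Term, ← hcover]
    _ ≤ ∑ j ∈ Icc 1 J, ∑ t ∈ bucket j, G1Term z h t + ∑ t ∈ last, G1Term z h t := by
        refine (sum_union_le_of_nonneg fun t ht =>
          G1Term_nonneg hh (filter_subset _ _ (mem_inter.1 ht).2)).trans (add_le_add ?_ le_rfl)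
        exact sum_biUnion_le_of_nonneg fun j _ t ht => G1Term_nonneg hh (filter_subset _ _ ht)
    _ ≤ _ := by
        rw [mul_add, mul_sum]
        gcongr with j
        · exact sum_G1Term_le hh (filter_subset _ _) fun t ht => (mem_filter.1 ht).2.1
        · exact sum_G1Term_le hh (filter_subset _ _) fun t ht => (mem_filter.1 ht).2

theorem stmt_1 (T : ℕ) (hT : 1 ≤ T) (z h : ℕ → ℝ)
    (hz : ∀ t ∈ Finset.Icc 1 T, 0 ≤ z t)
    (hh : ∀ t ∈ Finset.Icc 1 T, 0 < h t)
    (J : ℕ) (θ : ℕ → ℝ)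
    (hθdec : ∀ j ≤ J, θ (j + 1) < θ j)
    (hθlast : θ (J + 1) = 0)
    (hθ0 : ∀ t ∈ Finset.Icc 1 T, h t ≤ θ 0) :
    G1 T z h ≤
      3 / 2 *
        ((∑ j ∈ Finset.Icc 1 J,
            (Real.sqrt (θ (j - 1)) *
              ∑ t ∈ (Finset.Icc 1 T).filter (fun t => h t ≤ θ (j - 1) ∧ θ j < h t),
                Real.sqrt (z t)) ^ ((2 : ℝ) / 3))
          + (Real.sqrt (θ J) *
              ∑ t ∈ (Finset.Icc 1 T).filter (fun t => h t ≤ θ J),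
                Real.sqrt (z t)) ^ ((2 : ℝ) / 3)) :=
  stmt_1_general T z h hh J θ hθ0
end

section
/- Let T be a positive integer, let z_1,…,z_T ≥ 0 and h_1,…,h_T > 0 be real sequences, and let z_max = max_{t∈[T]} z_t and h_max = max_{t∈[T]} h_t. Then for every positive integer J it holds that G1(z_{1:T}, h_{1:T}) ≤ (3/2) · min{ ( √(2J) · ∑_{t=1}^T √(z_t h_t) )^{2/3} + ( 2^{−J/2} √(z_max h_max) )^{2/3} T^{2/3} , ( ∑_{t=1}^T √(z_t h_max) )^{2/3} }. -/
open Finset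

theorem mul_div_rpow_one_sub_le_rpow_sub {p A b : ℝ} (hp0 : 0 ≤ p) (hp1 : p ≤ 1)
    (hA : 0 ≤ A) (hb : 0 ≤ b) :
    p * (b / (A + b) ^ (1 - p)) ≤ (A + b) ^ p - A ^ p := by
  rcases (add_nonneg hA hb).eq_or_lt with hS | hS
  · obtain ⟨rfl, rfl⟩ : A = 0 ∧ b = 0 := ⟨by linarith, by linarith⟩
    simp
  have hS1p : 0 < (A + b) ^ (1 - p) := Real.rpow_pos_of_pos hS _
  have amgm : A ^ p * (A + b) ^ (1 - p) ≤ p * A + (1 - p) * (A + b) :=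
    Real.geom_mean_le_arith_mean2_weighted hp0 (by linarith) hA hS.le (by ring)
  have hsplit : (A + b) ^ p * (A + b) ^ (1 - p) = A + b := by
    rw [← Real.rpow_add hS]; simp
  rw [mul_div_assoc', div_le_iff₀ hS1p]
  nlinarith

theorem mul_sum_div_rpow_prefix_le {α : Type*} [LinearOrder α] {p : ℝ} (hp0 : 0 ≤ p)
    (hp1 : p ≤ 1) {a : α → ℝ} (s : Finset α) (ha : ∀ t ∈ s, 0 ≤ a t) :
    p * ∑ t ∈ s, a t / (∑ u ∈ s with u ≤ t, a u) ^ (1 - p) ≤ (∑ t ∈ s, a t) ^ p := by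
  induction s using Finset.induction_on_max with
  | empty => simpa using Real.rpow_nonneg le_rfl p
  | insert m s hlt ih =>
    have hm : m ∉ s := fun hm => (hlt m hm).false
    have ha' : ∀ t ∈ s, 0 ≤ a t := fun t ht => ha t (mem_insert_of_mem ht)
    have hprefix : ∀ t ∈ s, {u ∈ insert m s | u ≤ t} = {u ∈ s | u ≤ t} :=
      fun t ht => by rw [filter_insert, if_neg (hlt t ht).not_ge]
    have htop : {u ∈ insert m s | u ≤ m} = insert m s :=
      filter_true_of_mem fun u hu => (mem_insert.1 hu).elim le_of_eq fun hu => (hlt u hu).le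
    have hstep :=
      mul_div_rpow_one_sub_le_rpow_sub hp0 hp1 (sum_nonneg ha') (ha m (mem_insert_self m s))
    have hrest : ∑ t ∈ s, a t / (∑ u ∈ insert m s with u ≤ t, a u) ^ (1 - p)
        = ∑ t ∈ s, a t / (∑ u ∈ s with u ≤ t, a u) ^ (1 - p) :=
      sum_congr rfl fun t ht => by rw [hprefix t ht]
    rw [sum_insert hm, htop, hrest, sum_insert hm, add_comm (a m)]
    linarith [ih ha']

theorem mul_sum_div_rpow_le_of_prefix_le {α : Type*} [LinearOrder α] {p H : ℝ} (hp0 : 0 ≤ p)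
    (hp1 : p ≤ 1) (hH0 : 0 ≤ H) {a h B : α → ℝ} (s : Finset α) (ha : ∀ t ∈ s, 0 ≤ a t)
    (hh : ∀ t ∈ s, 0 < h t) (hH : ∀ t ∈ s, h t ≤ H)
    (hB : ∀ t ∈ s, ∑ u ∈ s with u ≤ t, a u / h u ≤ B t) :
    p * ∑ t ∈ s, a t / B t ^ (1 - p) ≤ H ^ (1 - p) * (∑ t ∈ s, a t) ^ p := by
  have hterm : ∀ t ∈ s, a t / B t ^ (1 - p)
      ≤ H ^ (1 - p) * (a t / (∑ u ∈ s with u ≤ t, a u) ^ (1 - p)) := by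
    intro t ht
    set P := ∑ u ∈ s with u ≤ t, a u
    have hHpos : 0 < H := (hh t ht).trans_le (hH t ht)
    rcases (ha t ht).eq_or_lt with hat | hat
    · simp [← hat]
    have hPpos : 0 < P := hat.trans_le <| single_le_sum (f := a)
      (fun u hu => ha u (mem_filter.1 hu).1) (mem_filter.2 ⟨ht, le_rfl⟩)
    have hP : 0 < P / H := div_pos hPpos hHpos
    have hPB : P / H ≤ B t := by
      refine le_trans ?_ (hB t ht)
      rw [sum_div]
      exact sum_le_sum fun u hu => div_le_div_of_nonneg_left (ha u (mem_filter.1 hu).1)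
        (hh u (mem_filter.1 hu).1) (hH u (mem_filter.1 hu).1)
    calc a t / B t ^ (1 - p) ≤ a t / (P / H) ^ (1 - p) :=
          div_le_div_of_nonneg_left (ha t ht) (Real.rpow_pos_of_pos hP _)
            (Real.rpow_le_rpow hP.le hPB (by linarith))
      _ = H ^ (1 - p) * (a t / P ^ (1 - p)) := by
          rw [Real.div_rpow hPpos.le hHpos.le]; field_simp
  calc p * ∑ t ∈ s, a t / B t ^ (1 - p)
      ≤ p * ∑ t ∈ s, H ^ (1 - p) * (a t / (∑ u ∈ s with u ≤ t, a u) ^ (1 - p)) :=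
        mul_le_mul_of_nonneg_left (sum_le_sum hterm) hp0
    _ = H ^ (1 - p) * (p * ∑ t ∈ s, a t / (∑ u ∈ s with u ≤ t, a u) ^ (1 - p)) := by
        rw [← mul_sum]; ring
    _ ≤ H ^ (1 - p) * (∑ t ∈ s, a t) ^ p :=
        mul_le_mul_of_nonneg_left (mul_sum_div_rpow_prefix_le hp0 hp1 s ha) (by positivity)

theorem sum_rpow_le_card_rpow_mul_rpow_sum {ι : Type*} (s : Finset ι) {f : ι → ℝ} {p : ℝ}
    (hp0 : 0 < p) (hp1 : p ≤ 1) (hf : ∀ i ∈ s, 0 ≤ f i) :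
    ∑ i ∈ s, f i ^ p ≤ (#s : ℝ) ^ (1 - p) * (∑ i ∈ s, f i) ^ p := by
  have hfp : ∀ i ∈ s, 0 ≤ f i ^ p := fun i hi => Real.rpow_nonneg (hf i hi) p
  have h :=
    Real.rpow_sum_le_const_mul_sum_rpow_of_nonneg s (p := p⁻¹) ((one_le_inv₀ hp0).2 hp1) hfp
  have hcancel : ∀ i ∈ s, (f i ^ p) ^ p⁻¹ = f i := fun i hi => by
    rw [← Real.rpow_mul (hf i hi), mul_inv_cancel₀ hp0.ne', Real.rpow_one]
  rw [sum_congr rfl hcancel] at h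
  have := Real.rpow_le_rpow (Real.rpow_nonneg (sum_nonneg hfp) _) h hp0.le
  rw [← Real.rpow_mul (sum_nonneg hfp), inv_mul_cancel₀ hp0.ne', Real.rpow_one,
    Real.mul_rpow (Real.rpow_nonneg (Nat.cast_nonneg _) _) (sum_nonneg hf),
    ← Real.rpow_mul (Nat.cast_nonneg _)] at this
  convert this using 3
  field_simp

theorem sqrt_mul_rpow_two_thirds {x y : ℝ} (hx : 0 ≤ x) (hy : 0 ≤ y) :
    (√x * y) ^ ((2 : ℝ) / 3) = x ^ ((1 : ℝ) / 3) * y ^ ((2 : ℝ) / 3) := by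
  rw [Real.mul_rpow (Real.sqrt_nonneg x) hy, Real.sqrt_eq_rpow, ← Real.rpow_mul hx]
  norm_num

noncomputable def dyadicLevel (J : ℕ) (x : ℝ) : ℕ := min J (Nat.log 2 ⌊x⌋₊)

theorem dyadicLevel_le (J : ℕ) (x : ℝ) : dyadicLevel J x ≤ J := min_le_left _ _

theorem two_pow_dyadicLevel_le {J : ℕ} {x : ℝ} (hx : 1 ≤ x) : (2 : ℝ) ^ dyadicLevel J x ≤ x :=
  calc (2 : ℝ) ^ dyadicLevel J x ≤ 2 ^ Nat.log 2 ⌊x⌋₊ :=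
        pow_le_pow_right₀ one_le_two (min_le_right _ _)
    _ ≤ ⌊x⌋₊ := by exact_mod_cast Nat.pow_log_le_self 2 (Nat.floor_pos.2 hx).ne'
    _ ≤ x := Nat.floor_le (zero_le_one.trans hx)

theorem lt_two_pow_dyadicLevel_succ {J : ℕ} {x : ℝ} (hx : 0 ≤ x) (hJ : dyadicLevel J x < J) :
    x < 2 ^ (dyadicLevel J x + 1) := by
  have hlog : dyadicLevel J x = Nat.log 2 ⌊x⌋₊ :=
    min_eq_right (not_le.1 fun h => hJ.ne (min_eq_left h)).le
  have := (Nat.floor_lt hx).1 (Nat.lt_pow_succ_log_self one_lt_two ⌊x⌋₊)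
  rw [hlog]
  exact_mod_cast this

section G1

variable {T : ℕ} {z h : ℕ → ℝ}

theorem sum_G1_summand_le (hh : ∀ t ∈ Icc 1 T, 0 < h t) {K : Finset ℕ} (hK : K ⊆ Icc 1 T)
    {H : ℝ} (hH0 : 0 ≤ H) (hH : ∀ t ∈ K, h t ≤ H) :
    ∑ t ∈ K, √(z t) / (∑ s ∈ Icc 1 t, √(z s) / h s) ^ ((1 : ℝ) / 3)
      ≤ 3 / 2 * (H ^ ((1 : ℝ) / 3) * (∑ t ∈ K, √(z t)) ^ ((2 : ℝ) / 3)) := by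
  have hprefix : ∀ t ∈ K, ∑ u ∈ K with u ≤ t, √(z u) / h u ≤ ∑ s ∈ Icc 1 t, √(z s) / h s := by
    intro t ht
    refine sum_le_sum_of_subset_of_nonneg (fun u hu => ?_) (fun u hu _ => ?_)
    · obtain ⟨huK, hut⟩ := mem_filter.1 hu
      exact mem_Icc.2 ⟨(mem_Icc.1 (hK huK)).1, hut⟩
    · exact div_nonneg (Real.sqrt_nonneg _)
        (hh u (Icc_subset_Icc_right (mem_Icc.1 (hK ht)).2 hu)).le
  have := mul_sum_div_rpow_le_of_prefix_le (p := 2 / 3) (by norm_num) (by norm_num) hH0 K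
    (fun t _ => Real.sqrt_nonneg (z t)) (fun t ht => hh t (hK ht)) hH hprefix
  rw [show (1 : ℝ) - 2 / 3 = 1 / 3 by norm_num] at this
  linarith

theorem G1_le_of_h_le (hh : ∀ t ∈ Icc 1 T, 0 < h t) {H : ℝ} (hH0 : 0 ≤ H)
    (hH : ∀ t ∈ Icc 1 T, h t ≤ H) :
    G1 T z h ≤ 3 / 2 * (∑ t ∈ Icc 1 T, √(z t * H)) ^ ((2 : ℝ) / 3) := by
  have hsum : ∑ t ∈ Icc 1 T, √(z t * H) = √H * ∑ t ∈ Icc 1 T, √(z t) := by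
    rw [mul_sum]
    exact sum_congr rfl fun t _ => by rw [Real.sqrt_mul' _ hH0, mul_comm]
  rw [hsum, sqrt_mul_rpow_two_thirds hH0 (sum_nonneg fun t _ => Real.sqrt_nonneg _)]
  exact sum_G1_summand_le hh subset_rfl hH0 hH

theorem sum_G1_summand_le_of_mem_Icc (hh : ∀ t ∈ Icc 1 T, 0 < h t) {K : Finset ℕ}
    (hK : K ⊆ Icc 1 T) {L c : ℝ} (hL : 0 ≤ L) (hc : 0 ≤ c)
    (hKh : ∀ t ∈ K, h t ∈ Set.Icc L (c * L)) :
    ∑ t ∈ K, √(z t) / (∑ s ∈ Icc 1 t, √(z s) / h s) ^ ((1 : ℝ) / 3)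
      ≤ 3 / 2 * (c ^ ((1 : ℝ) / 3) * (∑ t ∈ K, √(z t * h t)) ^ ((2 : ℝ) / 3)) := by
  have hsqrt : √L * ∑ t ∈ K, √(z t) ≤ ∑ t ∈ K, √(z t * h t) := by
    rw [mul_sum]
    refine sum_le_sum fun t ht => ?_
    rw [Real.sqrt_mul' _ (hL.trans (hKh t ht).1), mul_comm]
    exact mul_le_mul_of_nonneg_left (Real.sqrt_le_sqrt (hKh t ht).1) (Real.sqrt_nonneg _)
  calc _ ≤ 3 / 2 * ((c * L) ^ ((1 : ℝ) / 3) * (∑ t ∈ K, √(z t)) ^ ((2 : ℝ) / 3)) :=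
        sum_G1_summand_le hh hK (mul_nonneg hc hL) fun t ht => (hKh t ht).2
    _ = 3 / 2 * (c ^ ((1 : ℝ) / 3) * (√L * ∑ t ∈ K, √(z t)) ^ ((2 : ℝ) / 3)) := by
        rw [Real.mul_rpow hc hL,
          sqrt_mul_rpow_two_thirds hL (sum_nonneg fun t _ => Real.sqrt_nonneg _)]
        ring
    _ ≤ _ := by gcongr

theorem sum_G1_summand_le_of_z_le (hh : ∀ t ∈ Icc 1 T, 0 < h t) {K : Finset ℕ}
    (hK : K ⊆ Icc 1 T) {H zmax : ℝ} (hH0 : 0 ≤ H) (hH : ∀ t ∈ K, h t ≤ H)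
    (hz : ∀ t ∈ K, z t ≤ zmax) :
    ∑ t ∈ K, √(z t) / (∑ s ∈ Icc 1 t, √(z s) / h s) ^ ((1 : ℝ) / 3)
      ≤ 3 / 2 * (H ^ ((1 : ℝ) / 3) * (T * √zmax) ^ ((2 : ℝ) / 3)) := by
  have hcard : (#K : ℝ) ≤ T := by
    exact_mod_cast (card_le_card hK).trans_eq (by simp)
  have hsum : ∑ t ∈ K, √(z t) ≤ T * √zmax :=
    calc ∑ t ∈ K, √(z t) ≤ ∑ t ∈ K, √zmax := sum_le_sum fun t ht => Real.sqrt_le_sqrt (hz t ht)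
      _ = #K * √zmax := by rw [sum_const, nsmul_eq_mul]
      _ ≤ T * √zmax := by gcongr
  calc _ ≤ _ := sum_G1_summand_le hh hK hH0 hH
    _ ≤ _ := by gcongr

theorem G1_le_dyadic (hh : ∀ t ∈ Icc 1 T, 0 < h t) {H zmax : ℝ} (hH0 : 0 ≤ H)
    (hH : ∀ t ∈ Icc 1 T, h t ≤ H) (hz : ∀ t ∈ Icc 1 T, z t ≤ zmax) (J : ℕ) :
    G1 T z h ≤ 3 / 2 * ((√(2 * J) * ∑ t ∈ Icc 1 T, √(z t * h t)) ^ ((2 : ℝ) / 3)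
      + ((2 : ℝ) ^ (-(J : ℝ) / 2) * √(zmax * H)) ^ ((2 : ℝ) / 3) * (T : ℝ) ^ ((2 : ℝ) / 3)) := by
  set level : ℕ → ℕ := fun t => dyadicLevel J (H / h t)
  set V : ℕ → ℝ := fun j => ∑ t ∈ Icc 1 T with level t = j, √(z t * h t)
  have hlevel : ∀ t ∈ Icc 1 T, level t ∈ range (J + 1) :=
    fun t _ => mem_range.2 (Nat.lt_succ_of_le (dyadicLevel_le _ _))
  have hupper : ∀ t ∈ Icc 1 T, h t ≤ H / 2 ^ level t := fun t ht => by
    rw [le_div_iff₀ (by positivity), mul_comm, ← le_div_iff₀ (hh t ht)]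
    exact two_pow_dyadicLevel_le ((one_le_div (hh t ht)).2 (hH t ht))
  have head : ∀ j ∈ range J,
      ∑ t ∈ Icc 1 T with level t = j, √(z t) / (∑ s ∈ Icc 1 t, √(z s) / h s) ^ ((1 : ℝ) / 3)
        ≤ 3 / 2 * ((2 : ℝ) ^ ((1 : ℝ) / 3) * V j ^ ((2 : ℝ) / 3)) := by
    intro j hj
    refine sum_G1_summand_le_of_mem_Icc hh (filter_subset _ _) (L := H / 2 ^ (j + 1))
      (by positivity) zero_le_two fun t ht => ?_
    obtain ⟨htT, rfl⟩ := mem_filter.1 ht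
    have hlt := lt_two_pow_dyadicLevel_succ (div_nonneg hH0 (hh t htT).le) (mem_range.1 hj)
    constructor
    · rw [div_le_iff₀ (by positivity), mul_comm, ← div_le_iff₀ (hh t htT)]
      exact hlt.le
    · calc h t ≤ H / 2 ^ level t := hupper t htT
        _ = 2 * (H / 2 ^ (level t + 1)) := by rw [pow_succ]; field_simp
  have tail :
      ∑ t ∈ Icc 1 T with level t = J, √(z t) / (∑ s ∈ Icc 1 t, √(z s) / h s) ^ ((1 : ℝ) / 3)
        ≤ 3 / 2 * ((H / 2 ^ J) ^ ((1 : ℝ) / 3) * (T * √zmax) ^ ((2 : ℝ) / 3)) := by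
    refine sum_G1_summand_le_of_z_le hh (filter_subset _ _) (by positivity)
      (fun t ht => ?_) fun t ht => hz t (mem_filter.1 ht).1
    obtain ⟨htT, hJ⟩ := mem_filter.1 ht
    simpa only [hJ] using hupper t htT
  have hV : ∑ j ∈ range J, V j ≤ ∑ t ∈ Icc 1 T, √(z t * h t) := by
    rw [← sum_fiberwise_of_maps_to hlevel, sum_range_succ, le_add_iff_nonneg_right]
    exact sum_nonneg fun t _ => Real.sqrt_nonneg _
  have hV0 : ∀ j ∈ range J, 0 ≤ V j := fun j _ => sum_nonneg fun t _ => Real.sqrt_nonneg _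
  have head_sum : (2 : ℝ) ^ ((1 : ℝ) / 3) * ∑ j ∈ range J, V j ^ ((2 : ℝ) / 3)
      ≤ (√(2 * J) * ∑ t ∈ Icc 1 T, √(z t * h t)) ^ ((2 : ℝ) / 3) := by
    have hpm := sum_rpow_le_card_rpow_mul_rpow_sum (range J) (p := 2 / 3) (by norm_num)
      (by norm_num) hV0
    rw [card_range, show (1 : ℝ) - 2 / 3 = 1 / 3 by norm_num] at hpm
    rw [sqrt_mul_rpow_two_thirds (by positivity) (sum_nonneg fun t _ => Real.sqrt_nonneg _),
      Real.mul_rpow zero_le_two (Nat.cast_nonneg J), mul_assoc]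
    gcongr
    exact hpm.trans (by gcongr)
  have tail_eq : (H / 2 ^ J) ^ ((1 : ℝ) / 3) * (T * √zmax) ^ ((2 : ℝ) / 3)
      = ((2 : ℝ) ^ (-(J : ℝ) / 2) * √(zmax * H)) ^ ((2 : ℝ) / 3) * (T : ℝ) ^ ((2 : ℝ) / 3) := by
    have hscale : (2 : ℝ) ^ (-(J : ℝ) / 2) * √(zmax * H) = √(H / 2 ^ J) * √zmax := by
      have h2 : (2 : ℝ) ^ (-(J : ℝ) / 2) = (√(2 ^ J))⁻¹ := by
        rw [Real.sqrt_eq_rpow, ← Real.rpow_natCast, ← Real.rpow_mul zero_le_two, neg_div,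
          Real.rpow_neg zero_le_two]
        ring_nf
      rw [h2, Real.sqrt_mul' _ hH0, Real.sqrt_div' _ (by positivity)]
      ring
    rw [hscale, sqrt_mul_rpow_two_thirds (by positivity) (Real.sqrt_nonneg _),
      Real.mul_rpow (Nat.cast_nonneg _) (Real.sqrt_nonneg _)]
    ring
  rw [G1, ← sum_fiberwise_of_maps_to hlevel, sum_range_succ]
  calc _ ≤ ∑ j ∈ range J, 3 / 2 * ((2 : ℝ) ^ ((1 : ℝ) / 3) * V j ^ ((2 : ℝ) / 3))
        + 3 / 2 * ((H / 2 ^ J) ^ ((1 : ℝ) / 3) * (T * √zmax) ^ ((2 : ℝ) / 3)) :=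
        add_le_add (sum_le_sum head) tail
    _ ≤ _ := by
        rw [← mul_sum, ← mul_sum, tail_eq, ← mul_add]
        gcongr

end G1

theorem stmt_2_general (T : ℕ) (hT : 1 ≤ T) (z h : ℕ → ℝ)
    (hh : ∀ t ∈ Finset.Icc 1 T, 0 < h t)
    (zmax hmax : ℝ)
    (hzmax : zmax = (Finset.Icc 1 T).sup' (Finset.nonempty_Icc.mpr hT) z)
    (hhmax : hmax = (Finset.Icc 1 T).sup' (Finset.nonempty_Icc.mpr hT) h)
    (J : ℕ) :
    G1 T z h ≤
      3 / 2 * min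
        ((Real.sqrt (2 * J) * ∑ t ∈ Finset.Icc 1 T, Real.sqrt (z t * h t)) ^ ((2 : ℝ) / 3)
          + ((2 : ℝ) ^ (-(J : ℝ) / 2) * Real.sqrt (zmax * hmax)) ^ ((2 : ℝ) / 3)
            * (T : ℝ) ^ ((2 : ℝ) / 3))
        ((∑ t ∈ Finset.Icc 1 T, Real.sqrt (z t * hmax)) ^ ((2 : ℝ) / 3)) := by
  have hh_le : ∀ t ∈ Icc 1 T, h t ≤ hmax := fun t ht => hhmax ▸ le_sup' h ht
  have hz_le : ∀ t ∈ Icc 1 T, z t ≤ zmax := fun t ht => hzmax ▸ le_sup' z ht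
  have h1 : 1 ∈ Icc 1 T := mem_Icc.2 ⟨le_rfl, hT⟩
  have hmax_nonneg : 0 ≤ hmax := (hh 1 h1).le.trans (hh_le 1 h1)
  rw [mul_min_of_nonneg _ _ (by norm_num)]
  exact le_min (G1_le_dyadic hh hmax_nonneg hh_le hz_le J) (G1_le_of_h_le hh hmax_nonneg hh_le)

theorem stmt_2 (T : ℕ) (hT : 1 ≤ T) (z h : ℕ → ℝ)
    (hz : ∀ t ∈ Finset.Icc 1 T, 0 ≤ z t)
    (hh : ∀ t ∈ Finset.Icc 1 T, 0 < h t)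
    (zmax hmax : ℝ)
    (hzmax : zmax = (Finset.Icc 1 T).sup' (Finset.nonempty_Icc.mpr hT) z)
    (hhmax : hmax = (Finset.Icc 1 T).sup' (Finset.nonempty_Icc.mpr hT) h)
    (J : ℕ) (hJ : 1 ≤ J) :
    G1 T z h ≤
      3 / 2 * min
        ((Real.sqrt (2 * J) * ∑ t ∈ Finset.Icc 1 T, Real.sqrt (z t * h t)) ^ ((2 : ℝ) / 3)
          + ((2 : ℝ) ^ (-(J : ℝ) / 2) * Real.sqrt (zmax * hmax)) ^ ((2 : ℝ) / 3)
            * (T : ℝ) ^ ((2 : ℝ) / 3))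
        ((∑ t ∈ Finset.Icc 1 T, Real.sqrt (z t * hmax)) ^ ((2 : ℝ) / 3)) :=
  stmt_2_general T hT z h hh zmax hmax hzmax hhmax J
end

section
/- Let T be a positive integer, let z_1,…,z_T ≥ 0, u_1,…,u_T ≥ 0 and h_1,…,h_T, ĥ_1,…,ĥ_T > 0 be real sequences with h_t ≤ ĥ_t for all t ∈ [T]. Suppose (β_t)_{t=1}^T is a sequence of positive reals satisfying Rule 1: β_t = β_{t−1} + (1/ĥ_t)(2√(z_t/β_t) + u_t/β_t) for all t ∈ [T], with β_0 = 0. Then F(β_{1:T}, z_{1:T}, u_{1:T}, h_{1:T}) ≤ 3.2 · G1(z_{1:T}, ĥ_{1:T}) + 2 · G2(u_{1:T}, ĥ_{1:T}). -/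
open Finset

/-- `G2(u_{1:T}, h_{1:T}) = ∑_{t=1}^T u_t / √(∑_{s=1}^t u_s/h_s)`. -/
noncomputable def G2 (T : ℕ) (u h : ℕ → ℝ) : ℝ :=
  ∑ t ∈ Finset.Icc 1 T, u t / Real.sqrt (∑ s ∈ Finset.Icc 1 t, u s / h s)

/-- `F(β_{1:T}, z_{1:T}, u_{1:T}, h_{1:T})
  = ∑_{t=1}^T ( 2√(z_t/β_t) + u_t/β_t + (β_t − β_{t−1}) h_t )`, where `β 0 = 0`. -/
noncomputable def F (T : ℕ) (β z u h : ℕ → ℝ) : ℝ :=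
  ∑ t ∈ Finset.Icc 1 T,
    (2 * Real.sqrt (z t / β t) + u t / β t + (β t - β (t - 1)) * h t)

theorem stmt_3 (T : ℕ) (hT : 1 ≤ T) (z u h hhat β : ℕ → ℝ)
    (hz : ∀ t ∈ Finset.Icc 1 T, 0 ≤ z t)
    (hu : ∀ t ∈ Finset.Icc 1 T, 0 ≤ u t)
    (hh : ∀ t ∈ Finset.Icc 1 T, 0 < h t)
    (hhhat : ∀ t ∈ Finset.Icc 1 T, 0 < hhat t)
    (hhhhat : ∀ t ∈ Finset.Icc 1 T, h t ≤ hhat t)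
    (hβpos : ∀ t ∈ Finset.Icc 1 T, 0 < β t)
    (hβ0 : β 0 = 0)
    (hrule : ∀ t ∈ Finset.Icc 1 T,
      β t = β (t - 1) + (1 / hhat t) * (2 * Real.sqrt (z t / β t) + u t / β t)) :
    F T β z u h ≤ 3.2 * G1 T z hhat + 2 * G2 T u hhat := by
  classical
  have hsub : ∀ t ∈ Finset.Icc 1 T, Finset.Icc 1 t ⊆ Finset.Icc 1 T := by
    intro t ht
    exact Finset.Icc_subset_Icc_right (Finset.mem_Icc.mp ht).2
  -- β is nonnegative at t-1 and increasing
  have hβmem : ∀ t ∈ Finset.Icc 1 T, 0 ≤ β (t - 1) ∧ β (t - 1) ≤ β t := by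
    intro t ht
    obtain ⟨ht1, htT⟩ := Finset.mem_Icc.mp ht
    have hb := hβpos t ht
    have hH := hhhat t ht
    have hu' := hu t ht
    have hstep : 0 ≤ (1 / hhat t) * (2 * Real.sqrt (z t / β t) + u t / β t) := by
      have h1 : 0 ≤ u t / β t := div_nonneg hu' hb.le
      have h2 : 0 ≤ Real.sqrt (z t / β t) := Real.sqrt_nonneg _
      have h3 : 0 ≤ 1 / hhat t := by positivity
      nlinarith
    refine ⟨?_, ?_⟩
    · rcases eq_or_lt_of_le ht1 with h1 | h1
      · have : t - 1 = 0 := by omega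
        rw [this, hβ0]
      · have hmem : t - 1 ∈ Finset.Icc 1 T := Finset.mem_Icc.mpr ⟨by omega, by omega⟩
        exact (hβpos _ hmem).le
    · have hr := hrule t ht
      linarith
  -- key step 1
  have key1 : ∀ t ∈ Finset.Icc 1 T,
      2 * (Real.sqrt (z t) / hhat t) ≤ β t * Real.sqrt (β t) - β (t - 1) * Real.sqrt (β (t - 1)) := by
    intro t ht
    obtain ⟨ha0, hab⟩ := hβmem t ht
    have hb := hβpos t ht
    have hH := hhhat t ht
    have hz' := hz t ht
    have hsb : 0 < Real.sqrt (β t) := Real.sqrt_pos.mpr hb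
    have hΔ1 : (1 / hhat t) * (2 * (Real.sqrt (z t) / Real.sqrt (β t))) ≤ β t - β (t - 1) := by
      have hr := hrule t ht
      rw [Real.sqrt_div hz' (β t)] at hr
      have hub : 0 ≤ u t / β t := div_nonneg (hu t ht) hb.le
      have h3 : 0 ≤ 1 / hhat t := by positivity
      nlinarith
    have hmono : Real.sqrt (β (t - 1)) ≤ Real.sqrt (β t) := Real.sqrt_le_sqrt hab
    have step : Real.sqrt (β t) * (β t - β (t - 1)) ≤
        β t * Real.sqrt (β t) - β (t - 1) * Real.sqrt (β (t - 1)) := by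
      nlinarith [mul_nonneg ha0 (sub_nonneg.mpr hmono)]
    calc 2 * (Real.sqrt (z t) / hhat t)
        = Real.sqrt (β t) * ((1 / hhat t) * (2 * (Real.sqrt (z t) / Real.sqrt (β t)))) := by
          field_simp
      _ ≤ Real.sqrt (β t) * (β t - β (t - 1)) :=
          mul_le_mul_of_nonneg_left hΔ1 hsb.le
      _ ≤ _ := step
  -- key step 2
  have key2 : ∀ t ∈ Finset.Icc 1 T,
      u t / hhat t ≤ β t ^ 2 - β (t - 1) ^ 2 := by
    intro t ht
    obtain ⟨ha0, hab⟩ := hβmem t ht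
    have hb := hβpos t ht
    have hH := hhhat t ht
    have hΔ2 : (1 / hhat t) * (u t / β t) ≤ β t - β (t - 1) := by
      have hr := hrule t ht
      have hnn : 0 ≤ (1 / hhat t) * (2 * Real.sqrt (z t / β t)) := by positivity
      nlinarith
    have step : β t * (β t - β (t - 1)) ≤ β t ^ 2 - β (t - 1) ^ 2 := by
      nlinarith [mul_nonneg ha0 (sub_nonneg.mpr hab)]
    calc u t / hhat t = β t * ((1 / hhat t) * (u t / β t)) := by field_simp
      _ ≤ β t * (β t - β (t - 1)) := mul_le_mul_of_nonneg_left hΔ2 hb.le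
      _ ≤ _ := step
  -- cumulative bounds
  have claim1 : ∀ t, 1 ≤ t → t ≤ T →
      2 * (∑ s ∈ Finset.Icc 1 t, Real.sqrt (z s) / hhat s) ≤ β t * Real.sqrt (β t) := by
    intro t ht1
    induction t, ht1 using Nat.le_induction with
    | base =>
      intro h1T
      have hk := key1 1 (Finset.mem_Icc.mpr ⟨le_refl 1, h1T⟩)
      rw [Finset.Icc_self, Finset.sum_singleton]
      simp only [Nat.sub_self, hβ0, Real.sqrt_zero, mul_zero, zero_mul, sub_zero] at hk
      linarith
    | succ t ht ih =>
      intro htT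
      have hmem : t + 1 ∈ Finset.Icc 1 T := Finset.mem_Icc.mpr ⟨by omega, htT⟩
      have hk := key1 (t + 1) hmem
      simp only [Nat.add_sub_cancel] at hk
      rw [Finset.sum_Icc_succ_top (by omega : 1 ≤ t + 1)]
      have iht := ih (by omega)
      linarith
  have claim2 : ∀ t, 1 ≤ t → t ≤ T →
      (∑ s ∈ Finset.Icc 1 t, u s / hhat s) ≤ β t ^ 2 := by
    intro t ht1
    induction t, ht1 using Nat.le_induction with
    | base =>
      intro h1T
      have hk := key2 1 (Finset.mem_Icc.mpr ⟨le_refl 1, h1T⟩)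
      rw [Finset.Icc_self, Finset.sum_singleton]
      simp only [Nat.sub_self, hβ0] at hk
      nlinarith
    | succ t ht ih =>
      intro htT
      have hmem : t + 1 ∈ Finset.Icc 1 T := Finset.mem_Icc.mpr ⟨by omega, htT⟩
      have hk := key2 (t + 1) hmem
      simp only [Nat.add_sub_cancel] at hk
      rw [Finset.sum_Icc_succ_top (by omega : 1 ≤ t + 1)]
      have iht := ih (by omega)
      linarith
  -- main estimate
  unfold F G1 G2
  rw [Finset.mul_sum, Finset.mul_sum, ← Finset.sum_add_distrib]
  apply Finset.sum_le_sum
  intro t ht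
  obtain ⟨ht1, htT⟩ := Finset.mem_Icc.mp ht
  obtain ⟨ha0, hab⟩ := hβmem t ht
  have hb := hβpos t ht
  have hH := hhhat t ht
  have hz' := hz t ht
  have hu' := hu t ht
  have hsub' := hsub t ht
  have hΔ : (β t - β (t - 1)) * hhat t = 2 * Real.sqrt (z t / β t) + u t / β t := by
    have hr := hrule t ht
    have h1 : β t - β (t - 1) = (1 / hhat t) * (2 * Real.sqrt (z t / β t) + u t / β t) := by
      linarith
    rw [h1]
    field_simp
  have hC : (β t - β (t - 1)) * h t ≤ 2 * Real.sqrt (z t / β t) + u t / β t := by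
    calc (β t - β (t - 1)) * h t ≤ (β t - β (t - 1)) * hhat t :=
          mul_le_mul_of_nonneg_left (hhhhat t ht) (sub_nonneg.mpr hab)
      _ = _ := hΔ
  have hA : 2 * (2 * Real.sqrt (z t / β t)) ≤
      3.2 * (Real.sqrt (z t) /
        (∑ s ∈ Finset.Icc 1 t, Real.sqrt (z s) / hhat s) ^ ((1 : ℝ) / 3)) := by
    rcases eq_or_lt_of_le hz' with h0 | h0
    · rw [← h0]
      simp [Real.sqrt_zero]
    · set S := ∑ s ∈ Finset.Icc 1 t, Real.sqrt (z s) / hhat s with hSdef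
      have hSpos : 0 < S := by
        have hterm : 0 < Real.sqrt (z t) / hhat t :=
          div_pos (Real.sqrt_pos.mpr h0) hH
        have hle : Real.sqrt (z t) / hhat t ≤ S :=
          Finset.single_le_sum
            (fun s hs => div_nonneg (Real.sqrt_nonneg _) (hhhat s (hsub' hs)).le)
            (Finset.mem_Icc.mpr ⟨ht1, le_refl t⟩)
        linarith
      have h32 := claim1 t ht1 htT
      have hc : 0 < S ^ ((1 : ℝ) / 3) := Real.rpow_pos_of_pos hSpos _
      have hsb : 0 < Real.sqrt (β t) := Real.sqrt_pos.mpr hb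
      have hsz : 0 < Real.sqrt (z t) := Real.sqrt_pos.mpr h0
      have hcube1 : (S ^ ((1 : ℝ) / 3)) ^ (3 : ℕ) = S := by
        rw [← Real.rpow_natCast (S ^ ((1 : ℝ) / 3)) 3, ← Real.rpow_mul hSpos.le]
        norm_num
      have hcube2 : (Real.sqrt (β t)) ^ (3 : ℕ) = β t * Real.sqrt (β t) := by
        rw [pow_succ, Real.sq_sqrt hb.le]
      have hpow : (4 * S ^ ((1 : ℝ) / 3)) ^ (3 : ℕ) ≤ (3.2 * Real.sqrt (β t)) ^ (3 : ℕ) := by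
        rw [mul_pow, mul_pow, hcube1, hcube2]
        norm_num
        nlinarith
      have h4 : 4 * S ^ ((1 : ℝ) / 3) ≤ 3.2 * Real.sqrt (β t) :=
        le_of_pow_le_pow_left₀ (by norm_num) (by positivity) hpow
      calc 2 * (2 * Real.sqrt (z t / β t)) = 4 * Real.sqrt (z t) / Real.sqrt (β t) := by
            rw [Real.sqrt_div hz' (β t)]; ring
        _ ≤ 3.2 * Real.sqrt (z t) / S ^ ((1 : ℝ) / 3) := by
            rw [div_le_div_iff₀ hsb hc]
            nlinarith [mul_le_mul_of_nonneg_left h4 hsz.le]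
        _ = 3.2 * (Real.sqrt (z t) / S ^ ((1 : ℝ) / 3)) := by ring
  have hB : 2 * (u t / β t) ≤
      2 * (u t / Real.sqrt (∑ s ∈ Finset.Icc 1 t, u s / hhat s)) := by
    rcases eq_or_lt_of_le hu' with h0 | h0
    · rw [← h0]; simp
    · set U := ∑ s ∈ Finset.Icc 1 t, u s / hhat s with hUdef
      have hUpos : 0 < U := by
        have hterm : 0 < u t / hhat t := div_pos h0 hH
        have hle : u t / hhat t ≤ U :=
          Finset.single_le_sum
            (fun s hs => div_nonneg (hu s (hsub' hs)) (hhhat s (hsub' hs)).le)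
            (Finset.mem_Icc.mpr ⟨ht1, le_refl t⟩)
        linarith
      have hU2 := claim2 t ht1 htT
      have hsqU : Real.sqrt U ≤ β t := by
        calc Real.sqrt U ≤ Real.sqrt (β t ^ 2) := Real.sqrt_le_sqrt hU2
          _ = β t := Real.sqrt_sq hb.le
      have hsqUpos : 0 < Real.sqrt U := Real.sqrt_pos.mpr hUpos
      have : u t / β t ≤ u t / Real.sqrt U :=
        div_le_div_of_nonneg_left hu' hsqUpos hsqU
      linarith
  linarith
end

section
/- Let T be a positive integer, let z_1,…,z_T ≥ 0, u_1,…,u_T ≥ 0, h_1,…,h_T > 0 and ĥ_1,…,ĥ_{T+1} > 0 be real sequences with h_t ≤ ĥ_t for all t ∈ [T], and let z_max = max_{t∈[T]} z_t and u_max = max_{t∈[T]} u_t. Suppose (β_t)_{t=1}^T is given by Rule 2: β_1 > 0 is arbitrary and β_t = β_{t−1} + (1/ĥ_t)(2√(z_{t−1}/β_{t−1}) + u_{t−1}/β_{t−1}) for t = 2,…,T. Then F(β_{1:T}, z_{1:T}, u_{1:T}, h_{1:T}) ≤ 4 · G1(z_{1:T}, ĥ_{2:T+1}) + 3 · G2(u_{1:T},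 ĥ_{2:T+1}) + 10√(z_max/β_1) + 5 u_max/β_1 + β_1 h_1. -/
open Finset

/-! ### Auxiliary definitions and lemmas -/

noncomputable def SZ (z hhat : ℕ → ℝ) (n : ℕ) : ℝ :=
  ∑ s ∈ Finset.Icc 1 n, Real.sqrt (z s) / hhat (s + 1)

noncomputable def RU (u hhat : ℕ → ℝ) (n : ℕ) : ℝ :=
  ∑ s ∈ Finset.Icc 1 n, u s / hhat (s + 1)

lemma SZ_zero (z hhat : ℕ → ℝ) : SZ z hhat 0 = 0 := by simp [SZ]

lemma RU_zero (u hhat : ℕ → ℝ) : RU u hhat 0 = 0 := by simp [RU]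

lemma SZ_succ (z hhat : ℕ → ℝ) (n : ℕ) :
    SZ z hhat (n + 1) = SZ z hhat n + Real.sqrt (z (n + 1)) / hhat (n + 1 + 1) := by
  rw [SZ, SZ, Finset.sum_Icc_succ_top (by omega)]

lemma RU_succ (u hhat : ℕ → ℝ) (n : ℕ) :
    RU u hhat (n + 1) = RU u hhat n + u (n + 1) / hhat (n + 1 + 1) := by
  rw [RU, RU, Finset.sum_Icc_succ_top (by omega)]

lemma hl_tel (T : ℕ) (f : ℕ → ℝ) :
    ∑ t ∈ Finset.Icc 1 T, (f (t - 1) - f t) = f 0 - f T := by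
  induction T with
  | zero => simp
  | succ n ih =>
    rw [Finset.sum_Icc_succ_top (by omega : 1 ≤ n + 1), ih]
    simp only [Nat.add_sub_cancel]
    ring

lemma hl_cube (x y : ℝ) (hx : 0 < x) (hxy : x ≤ y) :
    x * Real.sqrt x + 3 / 2 * Real.sqrt x * (y - x) ≤ y * Real.sqrt y := by
  have hx' := Real.sq_sqrt hx.le
  have hy' := Real.sq_sqrt (hx.le.trans hxy)
  have hpq : Real.sqrt x ≤ Real.sqrt y := Real.sqrt_le_sqrt hxy
  have hp : 0 < Real.sqrt x := Real.sqrt_pos.mpr hx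
  nlinarith [mul_nonneg (sq_nonneg (Real.sqrt y - Real.sqrt x))
    (by positivity : (0 : ℝ) ≤ Real.sqrt y + Real.sqrt x / 2)]

lemma per_core (w M iA iB iq : ℝ) (hw : 0 ≤ w) (hwM : w ≤ M)
    (hBA : iB ≤ iA) (hBq : iB ≤ iq) (hB : 0 ≤ iB) :
    w * iA ≤ w * iq + 5 / 2 * M * (iA - iB) := by
  have hM : 0 ≤ M := hw.trans hwM
  rcases le_total iA iq with hc | hc
  · have h1 : w * iA ≤ w * iq := mul_le_mul_of_nonneg_left hc hw
    have h2 : 0 ≤ M * (iA - iB) := mul_nonneg hM (by linarith)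
    linarith
  · have k1 : w * (iA - iq) ≤ M * (iA - iq) :=
      mul_le_mul_of_nonneg_right hwM (by linarith)
    have k2 : M * (iA - iq) ≤ M * (5 / 2 * (iA - iB)) :=
      mul_le_mul_of_nonneg_left (by linarith) hM
    nlinarith [k1, k2]

lemma per_z (w M b P Q c H : ℝ) (hw : 0 ≤ w) (hwM : w ≤ M) (hc : 0 < c)
    (hP : 0 ≤ P) (hQ : Q = P + w / H) (hH : 0 < H)
    (hb : (c + 3 * P) ^ ((1 : ℝ) / 3) ≤ b) :
    w / b ≤ w / Q ^ ((1 : ℝ) / 3)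
      + 5 / 2 * M * (1 / (c + 3 * P) ^ ((1 : ℝ) / 3) - 1 / (c + 3 * Q) ^ ((1 : ℝ) / 3)) := by
  have hM : 0 ≤ M := hw.trans hwM
  have hwH : 0 ≤ w / H := div_nonneg hw hH.le
  have hPQ : P ≤ Q := by rw [hQ]; linarith
  have hQ0 : 0 ≤ Q := hP.trans hPQ
  have hcP : 0 < c + 3 * P := by linarith
  have hcQ : 0 < c + 3 * Q := by linarith
  have hA : 0 < (c + 3 * P) ^ ((1 : ℝ) / 3) := Real.rpow_pos_of_pos hcP _
  have hB : 0 < (c + 3 * Q) ^ ((1 : ℝ) / 3) := Real.rpow_pos_of_pos hcQ _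
  have hAB : (c + 3 * P) ^ ((1 : ℝ) / 3) ≤ (c + 3 * Q) ^ ((1 : ℝ) / 3) :=
    Real.rpow_le_rpow hcP.le (by linarith) (by norm_num)
  have hBA' : 1 / (c + 3 * Q) ^ ((1 : ℝ) / 3) ≤ 1 / (c + 3 * P) ^ ((1 : ℝ) / 3) :=
    one_div_le_one_div_of_le hA hAB
  rcases eq_or_lt_of_le hw with hw0 | hw0
  · rw [← hw0]
    simp only [zero_div]
    have : 0 ≤ 5 / 2 * M * (1 / (c + 3 * P) ^ ((1 : ℝ) / 3) - 1 / (c + 3 * Q) ^ ((1 : ℝ) / 3)) :=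
      mul_nonneg (by linarith) (by linarith)
    linarith
  · have hQpos : 0 < Q := by
      have := div_pos hw0 hH
      rw [hQ]; linarith
    have hq : 0 < Q ^ ((1 : ℝ) / 3) := Real.rpow_pos_of_pos hQpos _
    have hqB : Q ^ ((1 : ℝ) / 3) ≤ (c + 3 * Q) ^ ((1 : ℝ) / 3) :=
      Real.rpow_le_rpow hQ0 (by linarith) (by norm_num)
    have hBq' : 1 / (c + 3 * Q) ^ ((1 : ℝ) / 3) ≤ 1 / Q ^ ((1 : ℝ) / 3) :=
      one_div_le_one_div_of_le hq hqB
    have h1 : w / b ≤ w / (c + 3 * P) ^ ((1 : ℝ) / 3) := by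
      rw [div_eq_mul_one_div w b, div_eq_mul_one_div w ((c + 3 * P) ^ ((1 : ℝ) / 3))]
      exact mul_le_mul_of_nonneg_left (one_div_le_one_div_of_le hA hb) hw
    refine h1.trans ?_
    have hcore := per_core w M (1 / (c + 3 * P) ^ ((1 : ℝ) / 3))
      (1 / (c + 3 * Q) ^ ((1 : ℝ) / 3)) (1 / Q ^ ((1 : ℝ) / 3)) hw hwM hBA' hBq'
      (by positivity)
    calc w / (c + 3 * P) ^ ((1 : ℝ) / 3) = w * (1 / (c + 3 * P) ^ ((1 : ℝ) / 3)) := by ring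
    _ ≤ w * (1 / Q ^ ((1 : ℝ) / 3))
        + 5 / 2 * M * (1 / (c + 3 * P) ^ ((1 : ℝ) / 3) - 1 / (c + 3 * Q) ^ ((1 : ℝ) / 3)) := hcore
    _ = w / Q ^ ((1 : ℝ) / 3)
        + 5 / 2 * M * (1 / (c + 3 * P) ^ ((1 : ℝ) / 3) - 1 / (c + 3 * Q) ^ ((1 : ℝ) / 3)) := by
      ring

lemma per_u (w M b P Q d H : ℝ) (hw : 0 ≤ w) (hwM : w ≤ M) (hd : 0 < d)
    (hP : 0 ≤ P) (hQ : Q = P + w / H) (hH : 0 < H)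
    (hb : Real.sqrt (d + 2 * P) ≤ b) :
    w / b ≤ 3 / 2 * (w / Real.sqrt Q)
      + 5 / 2 * M * (1 / Real.sqrt (d + 2 * P) - 1 / Real.sqrt (d + 2 * Q)) := by
  have hM : 0 ≤ M := hw.trans hwM
  have hwH : 0 ≤ w / H := div_nonneg hw hH.le
  have hPQ : P ≤ Q := by rw [hQ]; linarith
  have hQ0 : 0 ≤ Q := hP.trans hPQ
  have hcP : 0 < d + 2 * P := by linarith
  have hcQ : 0 < d + 2 * Q := by linarith
  have hA : 0 < Real.sqrt (d + 2 * P) := Real.sqrt_pos.mpr hcP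
  have hB : 0 < Real.sqrt (d + 2 * Q) := Real.sqrt_pos.mpr hcQ
  have hAB : Real.sqrt (d + 2 * P) ≤ Real.sqrt (d + 2 * Q) := Real.sqrt_le_sqrt (by linarith)
  have hBA' : 1 / Real.sqrt (d + 2 * Q) ≤ 1 / Real.sqrt (d + 2 * P) :=
    one_div_le_one_div_of_le hA hAB
  rcases eq_or_lt_of_le hw with hw0 | hw0
  · rw [← hw0]
    simp only [zero_div, mul_zero]
    have : 0 ≤ 5 / 2 * M * (1 / Real.sqrt (d + 2 * P) - 1 / Real.sqrt (d + 2 * Q)) :=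
      mul_nonneg (by linarith) (by linarith)
    linarith
  · have hQpos : 0 < Q := by
      have := div_pos hw0 hH
      rw [hQ]; linarith
    have hq : 0 < Real.sqrt Q := Real.sqrt_pos.mpr hQpos
    have hqB : Real.sqrt Q ≤ Real.sqrt (d + 2 * Q) := Real.sqrt_le_sqrt (by linarith)
    have hBq' : 1 / Real.sqrt (d + 2 * Q) ≤ 1 / Real.sqrt Q := one_div_le_one_div_of_le hq hqB
    have h1 : w / b ≤ w / Real.sqrt (d + 2 * P) := by
      rw [div_eq_mul_one_div w b, div_eq_mul_one_div w (Real.sqrt (d + 2 * P))]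
      exact mul_le_mul_of_nonneg_left (one_div_le_one_div_of_le hA hb) hw
    refine h1.trans ?_
    have hcore := per_core w M (1 / Real.sqrt (d + 2 * P)) (1 / Real.sqrt (d + 2 * Q))
      (1 / Real.sqrt Q) hw hwM hBA' hBq' (by positivity)
    have hwq : 0 ≤ w / Real.sqrt Q := div_nonneg hw hq.le
    calc w / Real.sqrt (d + 2 * P) = w * (1 / Real.sqrt (d + 2 * P)) := by ring
    _ ≤ w * (1 / Real.sqrt Q)
        + 5 / 2 * M * (1 / Real.sqrt (d + 2 * P) - 1 / Real.sqrt (d + 2 * Q)) := hcore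
    _ = w / Real.sqrt Q
        + 5 / 2 * M * (1 / Real.sqrt (d + 2 * P) - 1 / Real.sqrt (d + 2 * Q)) := by ring
    _ ≤ 3 / 2 * (w / Real.sqrt Q)
        + 5 / 2 * M * (1 / Real.sqrt (d + 2 * P) - 1 / Real.sqrt (d + 2 * Q)) := by linarith

lemma cube_rpow (x : ℝ) (hx : 0 ≤ x) : (x * Real.sqrt x) ^ ((1 : ℝ) / 3) = Real.sqrt x := by
  have h2 : x * Real.sqrt x = Real.sqrt x ^ (3 : ℕ) := by
    rw [pow_succ, Real.sq_sqrt hx]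
  rw [h2, ← Real.rpow_natCast (Real.sqrt x) 3, ← Real.rpow_mul (Real.sqrt_nonneg _)]
  norm_num

set_option maxHeartbeats 1000000 in
theorem stmt_4 (T : ℕ) (hT : 1 ≤ T) (z u h : ℕ → ℝ) (hhat : ℕ → ℝ) (β : ℕ → ℝ)
    (hz : ∀ t ∈ Finset.Icc 1 T, 0 ≤ z t)
    (hu : ∀ t ∈ Finset.Icc 1 T, 0 ≤ u t)
    (hh : ∀ t ∈ Finset.Icc 1 T, 0 < h t)
    (hhhat : ∀ t ∈ Finset.Icc 1 (T + 1), 0 < hhat t)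
    (hhhhat : ∀ t ∈ Finset.Icc 1 T, h t ≤ hhat t)
    (zmax umax : ℝ)
    (hzmax : zmax = (Finset.Icc 1 T).sup' (Finset.nonempty_Icc.mpr hT) z)
    (humax : umax = (Finset.Icc 1 T).sup' (Finset.nonempty_Icc.mpr hT) u)
    (hβ0 : β 0 = 0) (hβ1 : 0 < β 1)
    (hrule : ∀ t ∈ Finset.Icc 2 T,
      β t = β (t - 1)
        + (1 / hhat t) * (2 * Real.sqrt (z (t - 1) / β (t - 1)) + u (t - 1) / β (t - 1))) :
    F T β z u h ≤ 4 * G1 T z (fun s => hhat (s + 1)) + 3 * G2 T u (fun s => hhat (s + 1))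
      + 10 * Real.sqrt (zmax / β 1) + 5 * (umax / β 1) + β 1 * h 1 := by
  have hsβ1 : 0 < Real.sqrt (β 1) := Real.sqrt_pos.mpr hβ1
  set c : ℝ := β 1 * Real.sqrt (β 1) with hcdef
  have hcpos : 0 < c := mul_pos hβ1 hsβ1
  -- nonnegativity of partial sums
  have hSnn : ∀ n, n ≤ T → 0 ≤ SZ z hhat n := by
    intro n hn
    apply Finset.sum_nonneg
    intro s hs
    simp only [Finset.mem_Icc] at hs
    exact div_nonneg (Real.sqrt_nonneg _) (hhhat (s + 1) (by simp [Finset.mem_Icc]; omega)).le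
  have hRnn : ∀ n, n ≤ T → 0 ≤ RU u hhat n := by
    intro n hn
    apply Finset.sum_nonneg
    intro s hs
    simp only [Finset.mem_Icc] at hs
    exact div_nonneg (hu s (by simp [Finset.mem_Icc]; omega))
      (hhhat (s + 1) (by simp [Finset.mem_Icc]; omega)).le
  -- the key growth estimates for β
  have key : ∀ n, 1 ≤ n → n ≤ T →
      0 < β n ∧ β (n - 1) ≤ β n ∧
      c + 3 * SZ z hhat (n - 1) ≤ β n * Real.sqrt (β n) ∧
      β 1 ^ 2 + 2 * RU u hhat (n - 1) ≤ β n ^ 2 := by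
    intro n
    induction n with
    | zero => intro h1 _; omega
    | succ m ih =>
      intro _ hmT
      rcases Nat.eq_zero_or_pos m with rfl | hm
      · simp only [Nat.add_sub_cancel, SZ_zero, RU_zero, mul_zero, add_zero]
        exact ⟨hβ1, by rw [zero_add]; simp [hβ0]; exact hβ1.le, le_refl _, le_refl _⟩
      · obtain ⟨k, rfl⟩ : ∃ k, m = k + 1 := ⟨m - 1, by omega⟩
        obtain ⟨pm, _, cube_m, sq_m⟩ := ih (by omega) (by omega)
        simp only [Nat.add_sub_cancel] at cube_m sq_m ⊢
        have hm1 : k + 1 ∈ Finset.Icc 1 T := by simp [Finset.mem_Icc]; omega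
        have hzm := hz (k + 1) hm1
        have hum := hu (k + 1) hm1
        have hhm : 0 < hhat (k + 1 + 1) := hhhat (k + 1 + 1) (by simp [Finset.mem_Icc]; omega)
        have hr := hrule (k + 1 + 1) (by simp [Finset.mem_Icc]; omega)
        simp only [Nat.add_sub_cancel] at hr
        have hsβm : 0 < Real.sqrt (β (k + 1)) := Real.sqrt_pos.mpr pm
        have hsd : Real.sqrt (z (k + 1) / β (k + 1))
            = Real.sqrt (z (k + 1)) / Real.sqrt (β (k + 1)) := Real.sqrt_div hzm _
        have hDval : β (k + 1 + 1) - β (k + 1)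
            = (2 * (Real.sqrt (z (k + 1)) / Real.sqrt (β (k + 1)))
              + u (k + 1) / β (k + 1)) / hhat (k + 1 + 1) := by
          rw [hr, hsd]; ring
        have hDz : 2 * Real.sqrt (z (k + 1)) / Real.sqrt (β (k + 1)) / hhat (k + 1 + 1)
            ≤ β (k + 1 + 1) - β (k + 1) := by
          rw [hDval]
          refine div_le_div_of_nonneg_right ?_ hhm.le
          have h0 : 0 ≤ u (k + 1) / β (k + 1) := div_nonneg hum pm.le
          rw [mul_div_assoc]
          linarith
        have hDu : u (k + 1) / β (k + 1) / hhat (k + 1 + 1)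
            ≤ β (k + 1 + 1) - β (k + 1) := by
          rw [hDval]
          refine div_le_div_of_nonneg_right ?_ hhm.le
          have h0 : 0 ≤ Real.sqrt (z (k + 1)) / Real.sqrt (β (k + 1)) :=
            div_nonneg (Real.sqrt_nonneg _) hsβm.le
          linarith
        have hDpos : 0 ≤ β (k + 1 + 1) - β (k + 1) := by
          refine le_trans ?_ hDz
          positivity
        have hmono : β (k + 1) ≤ β (k + 1 + 1) := by linarith
        have pm1 : 0 < β (k + 1 + 1) := lt_of_lt_of_le pm hmono
        refine ⟨pm1, hmono, ?_, ?_⟩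
        · -- cube estimate
          have hc1 := hl_cube (β (k + 1)) (β (k + 1 + 1)) pm hmono
          have hc2 : 3 * (Real.sqrt (z (k + 1)) / hhat (k + 1 + 1))
              ≤ 3 / 2 * Real.sqrt (β (k + 1)) * (β (k + 1 + 1) - β (k + 1)) := by
            have h5 := mul_le_mul_of_nonneg_left hDz
              (by positivity : (0 : ℝ) ≤ 3 / 2 * Real.sqrt (β (k + 1)))
            have h6 : 3 / 2 * Real.sqrt (β (k + 1))
                * (2 * Real.sqrt (z (k + 1)) / Real.sqrt (β (k + 1)) / hhat (k + 1 + 1))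
                = 3 * (Real.sqrt (z (k + 1)) / hhat (k + 1 + 1)) := by
              field_simp
            rw [h6] at h5
            exact h5
          rw [SZ_succ]
          linarith
        · -- square estimate
          have hsq1 : β (k + 1) ^ 2 + 2 * β (k + 1) * (β (k + 1 + 1) - β (k + 1))
              ≤ β (k + 1 + 1) ^ 2 := by nlinarith [sq_nonneg (β (k + 1 + 1) - β (k + 1))]
          have hsq2 : 2 * (u (k + 1) / hhat (k + 1 + 1))
              ≤ 2 * β (k + 1) * (β (k + 1 + 1) - β (k + 1)) := by
            have h5 := mul_le_mul_of_nonneg_left hDu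
              (by positivity : (0 : ℝ) ≤ 2 * β (k + 1))
            have h6 : 2 * β (k + 1) * (u (k + 1) / β (k + 1) / hhat (k + 1 + 1))
                = 2 * (u (k + 1) / hhat (k + 1 + 1)) := by
              field_simp
            rw [h6] at h5
            exact h5
          rw [RU_succ]
          linarith
  -- max bounds
  have hzle : ∀ t ∈ Finset.Icc 1 T, z t ≤ zmax := by
    intro t ht; rw [hzmax]; exact Finset.le_sup' z ht
  have hule : ∀ t ∈ Finset.Icc 1 T, u t ≤ umax := by
    intro t ht; rw [humax]; exact Finset.le_sup' u ht
  have h1T : (1 : ℕ) ∈ Finset.Icc 1 T := by simp [Finset.mem_Icc]; omega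
  have hzmax0 : 0 ≤ zmax := le_trans (hz 1 h1T) (hzle 1 h1T)
  have humax0 : 0 ≤ umax := le_trans (hu 1 h1T) (hule 1 h1T)
  -- per-term bound
  have main : ∀ t ∈ Finset.Icc 1 T,
      2 * Real.sqrt (z t / β t) + u t / β t ≤
        (2 * (Real.sqrt (z t) / (SZ z hhat t) ^ ((1 : ℝ) / 3))
          + 5 * Real.sqrt zmax * (1 / (c + 3 * SZ z hhat (t - 1)) ^ ((1 : ℝ) / 3)
            - 1 / (c + 3 * SZ z hhat t) ^ ((1 : ℝ) / 3)))
        + (3 / 2 * (u t / Real.sqrt (RU u hhat t))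
          + 5 / 2 * umax * (1 / Real.sqrt (β 1 ^ 2 + 2 * RU u hhat (t - 1))
            - 1 / Real.sqrt (β 1 ^ 2 + 2 * RU u hhat t))) := by
    intro t ht
    have htIcc := ht
    simp only [Finset.mem_Icc] at ht
    obtain ⟨k, rfl⟩ : ∃ k, t = k + 1 := ⟨t - 1, by omega⟩
    simp only [Nat.add_sub_cancel]
    obtain ⟨pβ, _, cube, sq⟩ := key (k + 1) (by omega) ht.2
    simp only [Nat.add_sub_cancel] at cube sq
    have hH : 0 < hhat (k + 1 + 1) := hhhat (k + 1 + 1) (by simp [Finset.mem_Icc]; omega)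
    have hkT : k ≤ T := by omega
    have hb1 : (c + 3 * SZ z hhat k) ^ ((1 : ℝ) / 3) ≤ Real.sqrt (β (k + 1)) := by
      have h0 : 0 < c + 3 * SZ z hhat k := by
        have := hSnn k hkT; linarith
      have h4 := Real.rpow_le_rpow h0.le cube (by norm_num : (0 : ℝ) ≤ 1 / 3)
      rwa [cube_rpow _ pβ.le] at h4
    have hb2 : Real.sqrt (β 1 ^ 2 + 2 * RU u hhat k) ≤ β (k + 1) := by
      have := Real.sqrt_le_sqrt sq
      rwa [Real.sqrt_sq pβ.le] at this
    have hzt := hz (k + 1) htIcc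
    have hsd : Real.sqrt (z (k + 1) / β (k + 1))
        = Real.sqrt (z (k + 1)) / Real.sqrt (β (k + 1)) := Real.sqrt_div hzt _
    have pz := per_z (Real.sqrt (z (k + 1))) (Real.sqrt zmax) (Real.sqrt (β (k + 1)))
      (SZ z hhat k) (SZ z hhat (k + 1)) c (hhat (k + 1 + 1)) (Real.sqrt_nonneg _)
      (Real.sqrt_le_sqrt (hzle (k + 1) htIcc)) hcpos (hSnn k hkT) (SZ_succ z hhat k) hH hb1
    have pu := per_u (u (k + 1)) umax (β (k + 1)) (RU u hhat k) (RU u hhat (k + 1))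
      (β 1 ^ 2) (hhat (k + 1 + 1)) (hu (k + 1) htIcc) (hule (k + 1) htIcc)
      (by positivity) (hRnn k hkT) (RU_succ u hhat k) hH hb2
    rw [hsd]
    linarith
  -- sum the per-term bounds
  have tel1 := hl_tel T (fun n => 1 / (c + 3 * SZ z hhat n) ^ ((1 : ℝ) / 3))
  have tel2 := hl_tel T (fun n => 1 / Real.sqrt (β 1 ^ 2 + 2 * RU u hhat n))
  have sumA : ∑ t ∈ Finset.Icc 1 T, (2 * Real.sqrt (z t / β t) + u t / β t)
      ≤ 2 * (∑ t ∈ Finset.Icc 1 T, Real.sqrt (z t) / (SZ z hhat t) ^ ((1 : ℝ) / 3))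
        + 5 * Real.sqrt zmax * (1 / (c + 3 * SZ z hhat 0) ^ ((1 : ℝ) / 3)
          - 1 / (c + 3 * SZ z hhat T) ^ ((1 : ℝ) / 3))
        + (3 / 2 * (∑ t ∈ Finset.Icc 1 T, u t / Real.sqrt (RU u hhat t))
          + 5 / 2 * umax * (1 / Real.sqrt (β 1 ^ 2 + 2 * RU u hhat 0)
            - 1 / Real.sqrt (β 1 ^ 2 + 2 * RU u hhat T))) := by
    calc ∑ t ∈ Finset.Icc 1 T, (2 * Real.sqrt (z t / β t) + u t / β t)
        ≤ ∑ t ∈ Finset.Icc 1 T,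
          ((2 * (Real.sqrt (z t) / (SZ z hhat t) ^ ((1 : ℝ) / 3))
            + 5 * Real.sqrt zmax * (1 / (c + 3 * SZ z hhat (t - 1)) ^ ((1 : ℝ) / 3)
              - 1 / (c + 3 * SZ z hhat t) ^ ((1 : ℝ) / 3)))
          + (3 / 2 * (u t / Real.sqrt (RU u hhat t))
            + 5 / 2 * umax * (1 / Real.sqrt (β 1 ^ 2 + 2 * RU u hhat (t - 1))
              - 1 / Real.sqrt (β 1 ^ 2 + 2 * RU u hhat t)))) := Finset.sum_le_sum main
    _ = _ := by
      rw [Finset.sum_add_distrib, Finset.sum_add_distrib, Finset.sum_add_distrib,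
        ← Finset.mul_sum, ← Finset.mul_sum, ← Finset.mul_sum, ← Finset.mul_sum,
        tel1, tel2]
  -- bound on F
  have hAnn : ∀ i ∈ Finset.Icc 1 T, 0 ≤ 2 * Real.sqrt (z i / β i) + u i / β i := by
    intro i hi
    simp only [Finset.mem_Icc] at hi
    have hβi : 0 < β i := (key i hi.1 hi.2).1
    have := hu i (by simp [Finset.mem_Icc]; omega)
    have := Real.sqrt_nonneg (z i / β i)
    have := div_nonneg ‹0 ≤ u i› hβi.le
    linarith
  have hF : F T β z u h ≤ β 1 * h 1
      + 2 * ∑ t ∈ Finset.Icc 1 T, (2 * Real.sqrt (z t / β t) + u t / β t) := by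
    rw [F, Finset.sum_add_distrib]
    have hsplit : Finset.Icc 1 T = insert 1 (Finset.Icc 2 T) := by
      ext x; simp only [Finset.mem_Icc, Finset.mem_insert]; omega
    have h1n : (1 : ℕ) ∉ Finset.Icc 2 T := by simp [Finset.mem_Icc]
    have hβsum : ∑ t ∈ Finset.Icc 1 T, (β t - β (t - 1)) * h t
        ≤ β 1 * h 1 + ∑ t ∈ Finset.Icc 1 T, (2 * Real.sqrt (z t / β t) + u t / β t) := by
      have hsplit2 : ∑ t ∈ Finset.Icc 1 T, (β t - β (t - 1)) * h t
          = (β 1 - β (1 - 1)) * h 1 + ∑ t ∈ Finset.Icc 2 T, (β t - β (t - 1)) * h t := by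
        rw [hsplit, Finset.sum_insert h1n]
      have he1 : (β 1 - β (1 - 1)) * h 1 = β 1 * h 1 := by norm_num [hβ0]
      have hstep : ∑ t ∈ Finset.Icc 2 T, (β t - β (t - 1)) * h t
          ≤ ∑ t ∈ Finset.Icc 2 T,
            (2 * Real.sqrt (z (t - 1) / β (t - 1)) + u (t - 1) / β (t - 1)) := by
        apply Finset.sum_le_sum
        intro t ht
        simp only [Finset.mem_Icc] at ht
        have hmem : t ∈ Finset.Icc 1 T := by simp [Finset.mem_Icc]; omega
        have hkey := key t (by omega) ht.2
        have hmono := hkey.2.1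
        have hht : h t ≤ hhat t := hhhhat t hmem
        have hh0 : 0 < h t := hh t hmem
        have hr := hrule t (by simp [Finset.mem_Icc]; omega)
        have hhatpos : 0 < hhat t := hhhat t (by simp [Finset.mem_Icc]; omega)
        calc (β t - β (t - 1)) * h t ≤ (β t - β (t - 1)) * hhat t :=
          mul_le_mul_of_nonneg_left hht (by linarith)
        _ = 2 * Real.sqrt (z (t - 1) / β (t - 1)) + u (t - 1) / β (t - 1) := by
          rw [hr]
          field_simp
          ring
      have himg : ∑ t ∈ Finset.Icc 2 T,
          (2 * Real.sqrt (z (t - 1) / β (t - 1)) + u (t - 1) / β (t - 1))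
          ≤ ∑ t ∈ Finset.Icc 1 T, (2 * Real.sqrt (z t / β t) + u t / β t) := by
        have hinj : ∀ x ∈ Finset.Icc 2 T, ∀ y ∈ Finset.Icc 2 T,
            x - 1 = y - 1 → x = y := by
          intro x hx y hy hxy
          simp only [Finset.mem_Icc] at hx hy
          omega
        rw [show ∑ t ∈ Finset.Icc 2 T,
            (2 * Real.sqrt (z (t - 1) / β (t - 1)) + u (t - 1) / β (t - 1))
            = ∑ s ∈ (Finset.Icc 2 T).image (fun t => t - 1),
              (2 * Real.sqrt (z s / β s) + u s / β s) from (Finset.sum_image (f := fun s => 2 * Real.sqrt (z s / β s) + u s / β s) hinj).symm]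
        apply Finset.sum_le_sum_of_subset_of_nonneg
        · intro x hx
          simp only [Finset.mem_image, Finset.mem_Icc] at hx ⊢
          obtain ⟨a, ha, rfl⟩ := hx
          omega
        · intro i hi _
          exact hAnn i hi
      linarith [hsplit2, he1, hstep, himg]
    linarith
  -- clean the telescoped constants
  have hc13 : (c + 3 * SZ z hhat 0) ^ ((1 : ℝ) / 3) = Real.sqrt (β 1) := by
    rw [SZ_zero]
    norm_num
    exact cube_rpow _ hβ1.le
  have hd0 : Real.sqrt (β 1 ^ 2 + 2 * RU u hhat 0) = β 1 := by
    rw [RU_zero]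
    norm_num
    exact Real.sqrt_sq hβ1.le
  have hgz : 0 ≤ 1 / (c + 3 * SZ z hhat T) ^ ((1 : ℝ) / 3) := by
    have h0 : 0 < c + 3 * SZ z hhat T := by have := hSnn T le_rfl; linarith
    positivity
  have hgu : 0 ≤ 1 / Real.sqrt (β 1 ^ 2 + 2 * RU u hhat T) := by positivity
  have hG1 : G1 T z (fun s => hhat (s + 1))
      = ∑ t ∈ Finset.Icc 1 T, Real.sqrt (z t) / (SZ z hhat t) ^ ((1 : ℝ) / 3) := rfl
  have hG2 : G2 T u (fun s => hhat (s + 1))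
      = ∑ t ∈ Finset.Icc 1 T, u t / Real.sqrt (RU u hhat t) := rfl
  have hsqdiv : Real.sqrt (zmax / β 1) = Real.sqrt zmax / Real.sqrt (β 1) :=
    Real.sqrt_div hzmax0 _
  rw [hc13, hd0] at sumA
  -- final assembly
  have hda : Real.sqrt zmax * (1 / Real.sqrt (β 1) - 1 / (c + 3 * SZ z hhat T) ^ ((1 : ℝ) / 3))
      ≤ Real.sqrt zmax * (1 / Real.sqrt (β 1)) := by
    refine mul_le_mul_of_nonneg_left (by linarith) (Real.sqrt_nonneg _)
  have hdb : umax * (1 / β 1 - 1 / Real.sqrt (β 1 ^ 2 + 2 * RU u hhat T))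
      ≤ umax * (1 / β 1) := by
    refine mul_le_mul_of_nonneg_left (by linarith) humax0
  have hzfin : Real.sqrt zmax * (1 / Real.sqrt (β 1)) = Real.sqrt (zmax / β 1) := by
    rw [hsqdiv]; ring
  have hufin : umax * (1 / β 1) = umax / β 1 := by ring
  rw [hG1, hG2]
  linarith [hF, sumA, hda, hdb, hzfin.ge, hzfin.le, hufin.ge, hufin.le]
end

section
/- Let T be a positive integer, let z_1,…,z_T ≥ 0 and u_1,…,u_T ≥ 0 be real sequences, and let ĥ_1,…,ĥ_T > 0. Suppose (β_t)_{t=1}^T are positive reals satisfying Rule 1: β_t = β_{t−1} + (1/ĥ_t)(2√(z_t/β_t) + u_t/β_t) for all t ∈ [T], with β_0 = 0. Then for every t ∈ [T] one has β_t^{3/2} ≥ 2 ∑_{s=1}^t √(z_s)/ĥ_s and β_t^2 ≥ ∑_{s=1}^t u_s/ĥ_s. -/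
open Finset

lemma rpow32 (x : ℝ) (hx : 0 ≤ x) : x ^ ((3 : ℝ)/2) = x * Real.sqrt x := by
  rw [show (3:ℝ)/2 = 1 + 1/2 by norm_num, Real.rpow_add' hx (by norm_num),
    Real.rpow_one, ← Real.sqrt_eq_rpow]

theorem stmt_7 (T : ℕ) (hT : 1 ≤ T) (z u hhat β : ℕ → ℝ)
    (hz : ∀ t ∈ Finset.Icc 1 T, 0 ≤ z t)
    (hu : ∀ t ∈ Finset.Icc 1 T, 0 ≤ u t)
    (hhhat : ∀ t ∈ Finset.Icc 1 T, 0 < hhat t)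
    (hβpos : ∀ t ∈ Finset.Icc 1 T, 0 < β t)
    (hβ0 : β 0 = 0)
    (hrule : ∀ t ∈ Finset.Icc 1 T,
      β t = β (t - 1) + (1 / hhat t) * (2 * Real.sqrt (z t / β t) + u t / β t)) :
    ∀ t ∈ Finset.Icc 1 T,
      β t ^ ((3 : ℝ) / 2) ≥ 2 * ∑ s ∈ Finset.Icc 1 t, Real.sqrt (z s) / hhat s ∧
      β t ^ 2 ≥ ∑ s ∈ Finset.Icc 1 t, u s / hhat s := by
  -- strengthened induction
  have key : ∀ t, t ≤ T → 0 ≤ β t ∧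
      β t * Real.sqrt (β t) ≥ 2 * ∑ s ∈ Finset.Icc 1 t, Real.sqrt (z s) / hhat s ∧
      β t ^ 2 ≥ ∑ s ∈ Finset.Icc 1 t, u s / hhat s := by
    intro t
    induction t with
    | zero =>
      intro _
      simp [hβ0]
    | succ n ih =>
      intro hle
      obtain ⟨ha0, ihs, ihu⟩ := ih (by omega)
      have hmem : n + 1 ∈ Finset.Icc 1 T := by
        simp only [Finset.mem_Icc]; omega
      have hb : 0 < β (n+1) := hβpos _ hmem
      have hh : 0 < hhat (n+1) := hhhat _ hmem
      have hzn : 0 ≤ z (n+1) := hz _ hmem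
      have hun : 0 ≤ u (n+1) := hu _ hmem
      have hr := hrule _ hmem
      simp only [Nat.add_sub_cancel] at hr
      set a := β n with hadef
      set b := β (n+1) with hbdef
      have hsqrt_div : Real.sqrt (z (n+1) / b) = Real.sqrt (z (n+1)) / Real.sqrt b :=
        Real.sqrt_div hzn b
      rw [hsqrt_div] at hr
      have hsb : Real.sqrt b * Real.sqrt b = b := Real.mul_self_sqrt hb.le
      have hsbpos : 0 < Real.sqrt b := Real.sqrt_pos.mpr hb
      have hsz : 0 ≤ Real.sqrt (z (n+1)) := Real.sqrt_nonneg _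
      have hab : a ≤ b := by
        have h1 : 0 ≤ (1 / hhat (n+1)) * (2 * (Real.sqrt (z (n+1)) / Real.sqrt b) + u (n+1) / b) := by
          positivity
        linarith [hr]
      have hsa : Real.sqrt a ≤ Real.sqrt b := Real.sqrt_le_sqrt hab
      have hsa0 : 0 ≤ Real.sqrt a := Real.sqrt_nonneg _
      have hdiff : b - a = (1 / hhat (n+1)) * (2 * (Real.sqrt (z (n+1)) / Real.sqrt b) + u (n+1) / b) := by
        linarith [hr]
      have hc : Real.sqrt (z (n+1)) / Real.sqrt b * Real.sqrt b = Real.sqrt (z (n+1)) :=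
        div_mul_cancel₀ _ hsbpos.ne'
      have hd : u (n+1) / b * b = u (n+1) := div_mul_cancel₀ _ hb.ne'
      have he : Real.sqrt (z (n+1)) / Real.sqrt b * b = Real.sqrt (z (n+1)) * Real.sqrt b := by
        rw [div_mul_eq_mul_div, div_eq_iff hsbpos.ne', mul_assoc, hsb]
      have hstep1 : (b - a) * Real.sqrt b ≥ 2 * (Real.sqrt (z (n+1)) / hhat (n+1)) := by
        rw [hdiff]
        have heq : (1 / hhat (n+1)) * (2 * (Real.sqrt (z (n+1)) / Real.sqrt b) + u (n+1) / b) * Real.sqrt b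
            = 2 * (Real.sqrt (z (n+1)) / hhat (n+1)) + (1 / hhat (n+1)) * (u (n+1) / b * Real.sqrt b) := by
          rw [show (1 / hhat (n+1)) * (2 * (Real.sqrt (z (n+1)) / Real.sqrt b) + u (n+1) / b) * Real.sqrt b
            = (1 / hhat (n+1)) * (2 * (Real.sqrt (z (n+1)) / Real.sqrt b * Real.sqrt b)
              + u (n+1) / b * Real.sqrt b) from by ring, hc]
          ring
        rw [heq]
        have : 0 ≤ (1 / hhat (n+1)) * (u (n+1) / b * Real.sqrt b) := by positivity
        linarith
      have hstep2 : (b - a) * b ≥ u (n+1) / hhat (n+1) := by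
        rw [hdiff]
        have heq : (1 / hhat (n+1)) * (2 * (Real.sqrt (z (n+1)) / Real.sqrt b) + u (n+1) / b) * b
            = (1 / hhat (n+1)) * (2 * (Real.sqrt (z (n+1)) * Real.sqrt b)) + u (n+1) / hhat (n+1) := by
          rw [show (1 / hhat (n+1)) * (2 * (Real.sqrt (z (n+1)) / Real.sqrt b) + u (n+1) / b) * b
            = (1 / hhat (n+1)) * (2 * (Real.sqrt (z (n+1)) / Real.sqrt b * b)
              + u (n+1) / b * b) from by ring, he, hd]
          ring
        rw [heq]
        have : 0 ≤ (1 / hhat (n+1)) * (2 * (Real.sqrt (z (n+1)) * Real.sqrt b)) := by positivity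
        linarith
      have hsum1 : ∑ s ∈ Finset.Icc 1 (n+1), Real.sqrt (z s) / hhat s
          = (∑ s ∈ Finset.Icc 1 n, Real.sqrt (z s) / hhat s) + Real.sqrt (z (n+1)) / hhat (n+1) :=
        Finset.sum_Icc_succ_top (by omega) _
      have hsum2 : ∑ s ∈ Finset.Icc 1 (n+1), u s / hhat s
          = (∑ s ∈ Finset.Icc 1 n, u s / hhat s) + u (n+1) / hhat (n+1) :=
        Finset.sum_Icc_succ_top (by omega) _
      refine ⟨hb.le, ?_, ?_⟩
      · rw [hsum1]
        have h1 : a * Real.sqrt a ≤ a * Real.sqrt b := by nlinarith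
        have hexpand : b * Real.sqrt b = (b - a) * Real.sqrt b + a * Real.sqrt b := by ring
        linarith
      · rw [hsum2]
        have h1 : a ^ 2 ≤ a * b := by nlinarith
        have hexpand : b ^ 2 = (b - a) * b + a * b := by ring
        linarith
  intro t ht
  simp only [Finset.mem_Icc] at ht
  obtain ⟨h0, h1, h2⟩ := key t ht.2
  have hbpos : 0 < β t := hβpos t (by simp [Finset.mem_Icc]; omega)
  rw [rpow32 _ hbpos.le]
  exact ⟨h1, h2⟩
end

section
/- Let T be a positive integer, let z_1,…,z_T ≥ 0 and u_1,…,u_T ≥ 0 be real sequences, and let ĥ_1,…,ĥ_T > 0. Suppose (β_t)_{t=1}^T is given by Rule 2: β_1 > 0 is arbitrary and β_t = β_{t−1} + (1/ĥ_t)(2√(z_{t−1}/β_{t−1}) + u_{t−1}/β_{t−1}) for t = 2,…,T. Then for every t ∈ [T] one has β_t^{3/2} ≥ β_1^{3/2} + 2 ∑_{s=1}^{t−1} √(z_s)/ĥ_{s+1} and β_t^2 ≥ β_1^2 + ∑_{s=1}^{t−1} u_s/ĥ_{s+1}. -/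
open Finset

lemma rpow_three_halves {x : ℝ} (hx : 0 < x) : x ^ ((3:ℝ)/2) = x * Real.sqrt x := by
  rw [show (3:ℝ)/2 = 1 + 1/2 by norm_num, Real.rpow_add hx, Real.rpow_one,
    ← Real.sqrt_eq_rpow]

theorem stmt_8 (T : ℕ) (hT : 1 ≤ T) (z u hhat β : ℕ → ℝ)
    (hz : ∀ t ∈ Finset.Icc 1 T, 0 ≤ z t)
    (hu : ∀ t ∈ Finset.Icc 1 T, 0 ≤ u t)
    (hhhat : ∀ t ∈ Finset.Icc 1 T, 0 < hhat t)
    (hβ1 : 0 < β 1)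
    (hrule : ∀ t ∈ Finset.Icc 2 T,
      β t = β (t - 1)
        + (1 / hhat t) * (2 * Real.sqrt (z (t - 1) / β (t - 1)) + u (t - 1) / β (t - 1))) :
    ∀ t ∈ Finset.Icc 1 T,
      β t ^ ((3 : ℝ) / 2)
          ≥ β 1 ^ ((3 : ℝ) / 2) + 2 * ∑ s ∈ Finset.Icc 1 (t - 1), Real.sqrt (z s) / hhat (s + 1) ∧
      β t ^ 2 ≥ β 1 ^ 2 + ∑ s ∈ Finset.Icc 1 (t - 1), u s / hhat (s + 1) := by
  have key : ∀ t, 1 ≤ t → t ≤ T → 0 < β t ∧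
      (β t ^ ((3 : ℝ) / 2)
          ≥ β 1 ^ ((3 : ℝ) / 2) + 2 * ∑ s ∈ Finset.Icc 1 (t - 1), Real.sqrt (z s) / hhat (s + 1) ∧
      β t ^ 2 ≥ β 1 ^ 2 + ∑ s ∈ Finset.Icc 1 (t - 1), u s / hhat (s + 1)) := by
    intro t ht
    induction t, ht using Nat.le_induction with
    | base =>
      intro _
      refine ⟨hβ1, ?_, ?_⟩ <;> simp
    | succ t ht ih =>
      intro hle
      have htT : t ≤ T := le_trans (Nat.le_succ t) hle
      obtain ⟨hpos, h32, h2⟩ := ih htT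
      have hmem : t ∈ Finset.Icc 1 T := Finset.mem_Icc.mpr ⟨ht, htT⟩
      have hmem1 : t + 1 ∈ Finset.Icc 1 T := Finset.mem_Icc.mpr ⟨by omega, hle⟩
      have hrule' := hrule (t + 1) (Finset.mem_Icc.mpr ⟨by omega, hle⟩)
      simp only [Nat.add_sub_cancel] at hrule'
      have hh : 0 < hhat (t + 1) := hhhat _ hmem1
      have hzt : 0 ≤ z t := hz _ hmem
      have hut : 0 ≤ u t := hu _ hmem
      have hsq : 0 < Real.sqrt (β t) := Real.sqrt_pos.mpr hpos
      have hsz : 0 ≤ Real.sqrt (z t) := Real.sqrt_nonneg _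
      set δ := (1 / hhat (t + 1)) * (2 * Real.sqrt (z t / β t) + u t / β t) with hδdef
      have hδ0 : 0 ≤ δ := by
        apply mul_nonneg (by positivity)
        have := Real.sqrt_nonneg (z t / β t)
        have : 0 ≤ u t / β t := div_nonneg hut hpos.le
        positivity
      have hβ' : 0 < β (t + 1) := by rw [hrule']; linarith
      have hdivz : Real.sqrt (z t / β t) = Real.sqrt (z t) / Real.sqrt (β t) :=
        Real.sqrt_div hzt _
      -- Claim A : sqrt (β t) * δ ≥ 2 * sqrt (z t) / hhat (t+1)
      have hA : Real.sqrt (β t) * δ ≥ 2 * (Real.sqrt (z t) / hhat (t + 1)) := by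
        have h1 : δ ≥ (1 / hhat (t + 1)) * (2 * Real.sqrt (z t / β t)) := by
          have : 0 ≤ u t / β t := div_nonneg hut hpos.le
          rw [hδdef]
          have h1h : 0 ≤ 1 / hhat (t + 1) := by positivity
          nlinarith
        have h2' : Real.sqrt (β t) * ((1 / hhat (t + 1)) * (2 * Real.sqrt (z t / β t)))
            = 2 * (Real.sqrt (z t) / hhat (t + 1)) := by
          rw [hdivz]; field_simp
        nlinarith
      -- Claim B : β t * δ ≥ u t / hhat (t+1)
      have hB : β t * δ ≥ u t / hhat (t + 1) := by
        have h1 : δ ≥ (1 / hhat (t + 1)) * (u t / β t) := by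
          have hs : 0 ≤ Real.sqrt (z t / β t) := Real.sqrt_nonneg _
          rw [hδdef]
          have h1h : 0 ≤ 1 / hhat (t + 1) := by positivity
          nlinarith
        have h2' : β t * ((1 / hhat (t + 1)) * (u t / β t)) = u t / hhat (t + 1) := by
          field_simp
        nlinarith
      -- split sums
      obtain ⟨m, rfl⟩ : ∃ m, t = m + 1 := ⟨t - 1, by omega⟩
      have hsplit1 : ∑ s ∈ Finset.Icc 1 (m + 1), Real.sqrt (z s) / hhat (s + 1)
          = (∑ s ∈ Finset.Icc 1 m, Real.sqrt (z s) / hhat (s + 1))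
            + Real.sqrt (z (m + 1)) / hhat (m + 2) := by
        rw [Finset.sum_Icc_succ_top (by omega : 1 ≤ m + 1)]
      have hsplit2 : ∑ s ∈ Finset.Icc 1 (m + 1), u s / hhat (s + 1)
          = (∑ s ∈ Finset.Icc 1 m, u s / hhat (s + 1)) + u (m + 1) / hhat (m + 2) := by
        rw [Finset.sum_Icc_succ_top (by omega : 1 ≤ m + 1)]
      simp only [Nat.add_sub_cancel] at h32 h2 ⊢
      simp only [show m + 1 + 1 = m + 2 from rfl] at hrule' hβ' hA hB hh ⊢
      refine ⟨hβ', ?_, ?_⟩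
      · rw [rpow_three_halves hβ']
        rw [rpow_three_halves hpos] at h32
        have hmono : Real.sqrt (β (m + 1)) ≤ Real.sqrt (β (m + 2)) := by
          apply Real.sqrt_le_sqrt; rw [hrule']; linarith
        rw [hsplit1]
        have step1 : β (m + 2) * Real.sqrt (β (m + 1)) ≤ β (m + 2) * Real.sqrt (β (m + 2)) :=
          mul_le_mul_of_nonneg_left hmono hβ'.le
        have step2 : β (m + 2) * Real.sqrt (β (m + 1))
            = β (m + 1) * Real.sqrt (β (m + 1)) + Real.sqrt (β (m + 1)) * δ := by
          rw [hrule']; ring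
        linarith
      · rw [hsplit2, hrule']
        nlinarith [mul_nonneg hpos.le hδ0, sq_nonneg δ]
  intro t ht
  have ht' := Finset.mem_Icc.mp ht
  exact (key t ht'.1 ht'.2).2
end

section
/- Let T be a positive integer, let (b_t)_{t=1}^{T+1} be a non-decreasing sequence of positive reals, let c > 1, and let S = { t ∈ [T] : b_{t+1} > c² b_t }. Then ∑_{t∈S} b_t^{−1/2} ≤ (c/(c−1)) · b_1^{−1/2}. -/
open Finset

private lemma mono_chain (b : ℕ → ℝ) (l u : ℕ)
    (hm : ∀ t ∈ Finset.Icc l u, b t ≤ b (t + 1)) :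
    ∀ s t, l ≤ s → s ≤ t → t ≤ u + 1 → b s ≤ b t := by
  intro s t hls hst
  induction t, hst using Nat.le_induction with
  | base => exact fun _ => le_rfl
  | succ t hst ih =>
      intro htu
      have htuu : t ≤ u := by omega
      exact (ih (by omega)).trans (hm t (Finset.mem_Icc.mpr ⟨hls.trans hst, htuu⟩))

private lemma aux_sum (c : ℝ) (hc : 1 < c) :
    ∀ n : ℕ, ∀ l : ℕ, ∀ b : ℕ → ℝ,
      (∀ t ∈ Finset.Icc l (l + n + 1), 0 < b t) →
      (∀ t ∈ Finset.Icc l (l + n), b t ≤ b (t + 1)) →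
      ∑ t ∈ (Finset.Icc l (l + n)).filter (fun t => c ^ 2 * b t < b (t + 1)),
          b t ^ (-(1 : ℝ) / 2)
        ≤ c / (c - 1) * b l ^ (-(1 : ℝ) / 2) := by
  intro n
  induction n using Nat.strong_induction_on with
  | _ n IH =>
    intro l b hpos hmono
    have hc0 : (0 : ℝ) < c := lt_trans one_pos hc
    have hc1 : (0 : ℝ) < c - 1 := by linarith
    have hbl : 0 < b l := hpos l (Finset.mem_Icc.mpr ⟨le_rfl, by omega⟩)
    have hfrac : (1 : ℝ) ≤ c / (c - 1) := by
      rw [le_div_iff₀ hc1]; linarith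
    set S := (Finset.Icc l (l + n)).filter (fun t => c ^ 2 * b t < b (t + 1)) with hS
    by_cases hSe : S.Nonempty
    · set m := S.min' hSe with hm
      have hmS : m ∈ S := S.min'_mem hSe
      obtain ⟨hmIcc, hmP⟩ := Finset.mem_filter.mp hmS
      obtain ⟨hlm, hmn⟩ := Finset.mem_Icc.mp hmIcc
      have hbm : 0 < b m := hpos m (Finset.mem_Icc.mpr ⟨hlm, by omega⟩)
      have hblm : b l ≤ b m := mono_chain b l (l + n) hmono l m le_rfl hlm (by omega)
      -- key: c/(c-1) * b m ^ (-1/2) ≤ c/(c-1) * b l ^ (-1/2)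
      have hrpow_mono : b m ^ (-(1:ℝ)/2) ≤ b l ^ (-(1:ℝ)/2) :=
        Real.rpow_le_rpow_of_nonpos hbl hblm (by norm_num)
      have hsum : ∑ t ∈ S, b t ^ (-(1:ℝ)/2)
          = b m ^ (-(1:ℝ)/2) + ∑ t ∈ S.erase m, b t ^ (-(1:ℝ)/2) :=
        (Finset.add_sum_erase S _ hmS).symm
      have hgoal : ∑ t ∈ S, b t ^ (-(1:ℝ)/2) ≤ c / (c - 1) * b m ^ (-(1:ℝ)/2) := by
        have herase_bound : ∑ t ∈ S.erase m, b t ^ (-(1:ℝ)/2)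
            ≤ (1 / (c - 1)) * b m ^ (-(1:ℝ)/2) := by
          by_cases hmu : m = l + n
          · have : S.erase m = ∅ := by
              apply Finset.eq_empty_of_forall_notMem
              intro t ht
              obtain ⟨htm, htS⟩ := Finset.mem_erase.mp ht
              have h1 := Finset.mem_Icc.mp (Finset.mem_filter.mp htS).1
              have h2 : m ≤ t := S.min'_le t htS
              omega
            rw [this, Finset.sum_empty]
            positivity
          · have hmlt : m + 1 ≤ l + n := by omega
            set n' := l + n - (m + 1) with hn'
            have hn'lt : n' < n := by omega
            have heq : (m + 1) + n' = l + n := by omega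
            have hIH := IH n' hn'lt (m + 1) b
              (by intro t ht; apply hpos; rw [Finset.mem_Icc] at ht ⊢; omega)
              (by intro t ht; apply hmono; rw [Finset.mem_Icc] at ht ⊢; omega)
            rw [heq] at hIH
            have hsub : S.erase m ⊆ (Finset.Icc (m + 1) (l + n)).filter
                (fun t => c ^ 2 * b t < b (t + 1)) := by
              intro t ht
              obtain ⟨htm, htS⟩ := Finset.mem_erase.mp ht
              obtain ⟨h1, h2⟩ := Finset.mem_filter.mp htS
              have h3 := Finset.mem_Icc.mp h1
              have h4 : m ≤ t := S.min'_le t htS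
              exact Finset.mem_filter.mpr ⟨Finset.mem_Icc.mpr ⟨by omega, h3.2⟩, h2⟩
            have hle : ∑ t ∈ S.erase m, b t ^ (-(1:ℝ)/2)
                ≤ ∑ t ∈ (Finset.Icc (m + 1) (l + n)).filter
                    (fun t => c ^ 2 * b t < b (t + 1)), b t ^ (-(1:ℝ)/2) := by
              apply Finset.sum_le_sum_of_subset_of_nonneg hsub
              intro t ht _
              have h1 := Finset.mem_Icc.mp (Finset.mem_filter.mp ht).1
              have := hpos t (Finset.mem_Icc.mpr ⟨by omega, by omega⟩)
              positivity
            -- bound b (m+1) ^ (-1/2) ≤ (1/c) * b m ^ (-1/2)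
            have hbm1 : c ^ 2 * b m ≤ b (m + 1) := le_of_lt hmP
            have hc2bm : 0 < c ^ 2 * b m := by positivity
            have hstep : b (m + 1) ^ (-(1:ℝ)/2) ≤ (c ^ 2 * b m) ^ (-(1:ℝ)/2) :=
              Real.rpow_le_rpow_of_nonpos hc2bm hbm1 (by norm_num)
            have hsplit : (c ^ 2 * b m) ^ (-(1:ℝ)/2)
                = (c ^ 2 : ℝ) ^ (-(1:ℝ)/2) * b m ^ (-(1:ℝ)/2) :=
              Real.mul_rpow (by positivity) (le_of_lt hbm)
            have hcpow : (c ^ 2 : ℝ) ^ (-(1:ℝ)/2) = 1 / c := by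
              rw [← Real.rpow_natCast c 2, ← Real.rpow_mul (le_of_lt hc0)]
              norm_num
              exact Real.rpow_neg_one c
            calc ∑ t ∈ S.erase m, b t ^ (-(1:ℝ)/2)
                ≤ c / (c - 1) * b (m + 1) ^ (-(1:ℝ)/2) := hle.trans hIH
              _ ≤ c / (c - 1) * ((c ^ 2 * b m) ^ (-(1:ℝ)/2)) := by
                  apply mul_le_mul_of_nonneg_left hstep; positivity
              _ = c / (c - 1) * ((1 / c) * b m ^ (-(1:ℝ)/2)) := by
                  rw [hsplit, hcpow]
              _ = (1 / (c - 1)) * b m ^ (-(1:ℝ)/2) := by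
                  field_simp
        rw [hsum]
        have : b m ^ (-(1:ℝ)/2) + (1 / (c - 1)) * b m ^ (-(1:ℝ)/2)
            = c / (c - 1) * b m ^ (-(1:ℝ)/2) := by
          field_simp
          ring
        linarith
      calc ∑ t ∈ S, b t ^ (-(1:ℝ)/2) ≤ c / (c - 1) * b m ^ (-(1:ℝ)/2) := hgoal
        _ ≤ c / (c - 1) * b l ^ (-(1:ℝ)/2) := by
            apply mul_le_mul_of_nonneg_left hrpow_mono; positivity
    · rw [Finset.not_nonempty_iff_eq_empty] at hSe
      rw [hSe, Finset.sum_empty]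
      positivity

theorem stmt_9 (T : ℕ) (hT : 1 ≤ T) (b : ℕ → ℝ)
    (hbpos : ∀ t ∈ Finset.Icc 1 (T + 1), 0 < b t)
    (hmono : ∀ t ∈ Finset.Icc 1 T, b t ≤ b (t + 1))
    (c : ℝ) (hc : 1 < c) :
    ∑ t ∈ (Finset.Icc 1 T).filter (fun t => c ^ 2 * b t < b (t + 1)),
        b t ^ (-(1 : ℝ) / 2)
      ≤ c / (c - 1) * b 1 ^ (-(1 : ℝ) / 2) := by
  have h := aux_sum c hc (T - 1) 1 b
  have hT' : 1 + (T - 1) = T := by omega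
  rw [hT'] at h
  exact h hbpos hmono
end

section
/- Let T be a positive integer, let (b_t)_{t=1}^{T+1} be a non-decreasing sequence of positive reals, let c > 1, and let S = { t ∈ [T] : b_{t+1} > c b_t }. Then ∑_{t∈S} b_t^{−1} ≤ (c/(c−1)) · b_1^{−1}. -/
open Finset

theorem stmt_10 (T : ℕ) (hT : 1 ≤ T) (b : ℕ → ℝ)
    (hbpos : ∀ t ∈ Finset.Icc 1 (T + 1), 0 < b t)
    (hmono : ∀ t ∈ Finset.Icc 1 T, b t ≤ b (t + 1))
    (c : ℝ) (hc : 1 < c) :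
    ∑ t ∈ (Finset.Icc 1 T).filter (fun t => c * b t < b (t + 1)), (b t)⁻¹
      ≤ c / (c - 1) * (b 1)⁻¹ := by
  have hc1 : (0:ℝ) < c - 1 := by linarith
  have hpos : ∀ t, 1 ≤ t → t ≤ T + 1 → 0 < b t := by
    intro t h1 h2; exact hbpos t (Finset.mem_Icc.mpr ⟨h1, h2⟩)
  have key : ∀ n, n ≤ T →
      ∑ t ∈ (Finset.Icc 1 n).filter (fun t => c * b t < b (t + 1)), (b t)⁻¹
        ≤ c / (c - 1) * ((b 1)⁻¹ - (b (n + 1))⁻¹) := by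
    intro n
    induction n with
    | zero =>
      intro _
      simp
    | succ n ih =>
      intro hn
      have hn' : n ≤ T := Nat.le_of_succ_le hn
      have ihn := ih hn'
      have hx : 0 < b (n + 1) := hpos (n+1) (Nat.le_add_left 1 n) (by omega)
      have hy : 0 < b (n + 2) := hpos (n+2) (by omega) (by omega)
      have hIcc : Finset.Icc 1 (n + 1) = insert (n + 1) (Finset.Icc 1 n) := by
        ext x; simp [Finset.mem_Icc]; omega
      rw [hIcc, Finset.filter_insert]
      by_cases hP : c * b (n + 1) < b (n + 1 + 1)
      · rw [if_pos hP, Finset.sum_insert (by simp)]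
        have hcy : c * (b (n + 2))⁻¹ ≤ (b (n + 1))⁻¹ := by
          rw [mul_inv_le_iff₀ hy, inv_mul_eq_div, le_div_iff₀ hx]
          linarith
        have hstep : (b (n + 1))⁻¹ ≤ c / (c - 1) * ((b (n+1))⁻¹ - (b (n + 2))⁻¹) := by
          rw [div_mul_eq_mul_div, le_div_iff₀ hc1]
          nlinarith [hcy]
        calc (b (n+1))⁻¹ + ∑ t ∈ (Finset.Icc 1 n).filter (fun t => c * b t < b (t + 1)), (b t)⁻¹
            ≤ c / (c - 1) * ((b (n+1))⁻¹ - (b (n + 2))⁻¹)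
              + c / (c - 1) * ((b 1)⁻¹ - (b (n + 1))⁻¹) := add_le_add hstep ihn
          _ = c / (c - 1) * ((b 1)⁻¹ - (b (n + 1 + 1))⁻¹) := by ring_nf
      · rw [if_neg hP]
        have hmle : b (n + 1) ≤ b (n + 2) := hmono (n+1) (Finset.mem_Icc.mpr ⟨by omega, hn⟩)
        have : (b (n + 1 + 1))⁻¹ ≤ (b (n + 1))⁻¹ := by
          exact inv_anti₀ hx hmle
        have hk : 0 ≤ c / (c - 1) := by positivity
        calc ∑ t ∈ (Finset.Icc 1 n).filter (fun t => c * b t < b (t + 1)), (b t)⁻¹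
            ≤ c / (c - 1) * ((b 1)⁻¹ - (b (n + 1))⁻¹) := ihn
          _ ≤ c / (c - 1) * ((b 1)⁻¹ - (b (n + 1 + 1))⁻¹) := by
              apply mul_le_mul_of_nonneg_left (by linarith) hk
  have hTb : 0 < b (T + 1) := hpos (T+1) (by omega) le_rfl
  calc ∑ t ∈ (Finset.Icc 1 T).filter (fun t => c * b t < b (t + 1)), (b t)⁻¹
      ≤ c / (c - 1) * ((b 1)⁻¹ - (b (T + 1))⁻¹) := key T le_rfl
    _ ≤ c / (c - 1) * (b 1)⁻¹ := by
        have hk : 0 ≤ c / (c - 1) := by positivity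
        have : 0 ≤ (b (T+1))⁻¹ := by positivity
        nlinarith
end

section
/- Let T be a positive integer, let z_1,…,z_T ≥ 0 and u_1,…,u_T ≥ 0 be real sequences, let ĥ_1,…,ĥ_{T+1} > 0, and let z_max = max_{t∈[T]} z_t. Suppose (β_t)_{t=1}^T is given by Rule 2: β_1 > 0 is arbitrary and β_t = β_{t−1} + (1/ĥ_t)(2√(z_{t−1}/β_{t−1}) + u_{t−1}/β_{t−1}) for t = 2,…,T. Then for every c > 1, ∑_{t=1}^T √(z_t/β_t) ≤ (c/2^{1/3}) · G1(z_{1:T}, ĥ_{2:T+1}) + (c/(c−1)) · √(z_max/β_1). -/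
/-!
Write `S_t = ∑_{s ≤ t} √z_s / ĥ_{s+1}`. Since `x ↦ x^{3/2}` lies above its tangent lines,
one step of Rule 2 raises `β^{3/2}` by at least `3 √z_t / ĥ_{t+1}`, whence
`β_{t+1}^{3/2} ≥ β_1^{3/2} + 3 S_t`. At the times where `2 S_t ≤ c³ β_t^{3/2}`, the summand
`√(z_t / β_t)` is at most `c / 2^{1/3} · √z_t / S_t^{1/3}`, a term of `G1`. At the other times
`√β` grows lacunarily: for two such times `t < t'` we get
`c³ β_t^{3/2} < 2 S_t ≤ β_{t'}^{3/2}`, so the sum of `1 / √β_t` over them is dominated by a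
geometric series, `c / ((c - 1) √β_1)`.
-/

open Finset

open Real

noncomputable def sqrtWeightedSum (z h : ℕ → ℝ) (t : ℕ) : ℝ :=
  ∑ s ∈ Icc 1 t, √(z s) / h s

section sqrtWeightedSum

variable {z h : ℕ → ℝ}

theorem G1_eq_sum (T : ℕ) :
    G1 T z h = ∑ t ∈ Icc 1 T, √(z t) / sqrtWeightedSum z h t ^ ((1 : ℝ) / 3) :=
  rfl

@[simp]
theorem sqrtWeightedSum_zero : sqrtWeightedSum z h 0 = 0 := by
  simp [sqrtWeightedSum]

theorem sqrtWeightedSum_succ (t : ℕ) :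
    sqrtWeightedSum z h (t + 1) = sqrtWeightedSum z h t + √(z (t + 1)) / h (t + 1) :=
  sum_Icc_succ_top (by omega) _

theorem sqrtWeightedSum_monotoneOn {T : ℕ} (hh : ∀ t ∈ Icc 1 T, 0 < h t) :
    MonotoneOn (sqrtWeightedSum z h) (Set.Iic T) := by
  intro s _ t ht hst
  refine sum_le_sum_of_subset_of_nonneg (Icc_subset_Icc_right hst) fun r hr _ => ?_
  have hrT : r ∈ Icc 1 T := by simp only [mem_Icc, Set.mem_Iic] at hr ht ⊢; omega
  exact div_nonneg (sqrt_nonneg _) (hh r hrT).le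

theorem sqrtWeightedSum_nonneg {t : ℕ} (hh : ∀ s ∈ Icc 1 t, 0 < h s) :
    0 ≤ sqrtWeightedSum z h t :=
  sum_nonneg fun s hs => div_nonneg (sqrt_nonneg _) (hh s hs).le

theorem div_le_sqrtWeightedSum {t : ℕ} (ht : 1 ≤ t) (hh : ∀ s ∈ Icc 1 t, 0 < h s) :
    √(z t) / h t ≤ sqrtWeightedSum z h t :=
  single_le_sum (f := fun s => √(z s) / h s)
    (fun s hs => div_nonneg (sqrt_nonneg _) (hh s hs).le) (mem_Icc.2 ⟨ht, le_rfl⟩)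

end sqrtWeightedSum

theorem sum_inv_le_of_lacunary {α : Type*} [LinearOrder α] {s : Finset α} {f : α → ℝ}
    {b c : ℝ} (hc : 1 < c) (hb : 0 < b) (hbf : ∀ t ∈ s, b ≤ f t)
    (hf : ∀ t ∈ s, ∀ t' ∈ s, t < t' → c * f t ≤ f t') :
    ∑ t ∈ s, (f t)⁻¹ ≤ c / (c - 1) / b := by
  have hc1 : 0 < c - 1 := by linarith
  induction s using Finset.induction_on_min generalizing b with
  | empty => simp only [sum_empty]; positivity
  | insert a s has ih =>
    have hfa : 0 < f a := hb.trans_le (hbf a (mem_insert_self a s))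
    have htail : ∑ t ∈ s, (f t)⁻¹ ≤ c / (c - 1) / (c * f a) :=
      ih (by positivity)
        (fun t ht => hf a (mem_insert_self a s) t (mem_insert_of_mem ht) (has t ht))
        (fun t ht t' ht' => hf t (mem_insert_of_mem ht) t' (mem_insert_of_mem ht'))
    have hsum : (f a)⁻¹ + c / (c - 1) / (c * f a) = c / (c - 1) / f a := by
      field_simp
      ring
    calc ∑ t ∈ insert a s, (f t)⁻¹
        = (f a)⁻¹ + ∑ t ∈ s, (f t)⁻¹ := sum_insert fun h => (has a h).false
      _ ≤ c / (c - 1) / f a := by linarith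
      _ ≤ c / (c - 1) / b :=
        div_le_div_of_nonneg_left (by positivity) hb (hbf a (mem_insert_self a s))

theorem sqrt_pow_three_add_le {a d : ℝ} (ha : 0 ≤ a) (hd : 0 ≤ d) :
    √a ^ 3 + 3 / 2 * √a * d ≤ √(a + d) ^ 3 := by
  have hx : 0 ≤ √a := sqrt_nonneg a
  have hxy : √a ≤ √(a + d) := sqrt_le_sqrt (by linarith)
  have hx2 : √a ^ 2 = a := sq_sqrt ha
  have hy2 : √(a + d) ^ 2 = a + d := sq_sqrt (by linarith)
  -- `y³ - x³ - 3/2 x (y² - x²) = (y - x)² (y + x/2)` with `x = √a`, `y = √(a + d)`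
  nlinarith [mul_nonneg (sq_nonneg (√(a + d) - √a)) (by linarith : 0 ≤ √(a + d) + √a / 2)]

theorem sqrt_pow_three_add_le_ruleTwo_step {b z u h : ℝ} (hb : 0 < b) (hu : 0 ≤ u)
    (hh : 0 < h) : √b ^ 3 + 3 * (√z / h) ≤ √(b + 1 / h * (2 * √(z / b) + u / b)) ^ 3 := by
  have hd : 0 ≤ 1 / h * (2 * √(z / b) + u / b) := by positivity
  have hlin : 3 * (√z / h) ≤ 3 / 2 * √b * (1 / h * (2 * √(z / b) + u / b)) := by
    have hsplit : 3 / 2 * √b * (1 / h * (2 * √(z / b) + u / b))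
        = 3 * (√z / h) + 3 / 2 * √b * (u / b) / h := by
      rw [sqrt_div' z hb.le]
      field_simp
    rw [hsplit]
    have : 0 ≤ 3 / 2 * √b * (u / b) / h := by positivity
    linarith
  linarith [sqrt_pow_three_add_le hb.le hd]

section CubicGrowth

variable {T : ℕ} {r S : ℕ → ℝ}

theorem le_of_cubic_growth (hr : ∀ t, 0 ≤ r t) (hS : MonotoneOn S (Set.Iic T)) (hS0 : 0 ≤ S 0)
    (hgrow : ∀ t < T, r 1 ^ 3 + 3 * S t ≤ r (t + 1) ^ 3) {t : ℕ} (ht : t ∈ Icc 1 T) :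
    r 1 ≤ r t := by
  rw [mem_Icc] at ht
  obtain ⟨s, rfl⟩ : ∃ s, t = s + 1 := ⟨t - 1, by omega⟩
  have hsT : s < T := by omega
  have hSs : S 0 ≤ S s :=
    hS (Set.mem_Iic.2 (Nat.zero_le T)) (Set.mem_Iic.2 hsT.le) (Nat.zero_le s)
  exact (pow_le_pow_iff_left₀ (hr 1) (hr _) three_ne_zero).1 (by linarith [hgrow s hsT])

theorem mul_le_of_cubic_growth {c : ℝ} (hc : 0 ≤ c) (hr : ∀ t, 0 ≤ r t)
    (hS : MonotoneOn S (Set.Iic T)) (hgrow : ∀ t < T, r 1 ^ 3 + 3 * S t ≤ r (t + 1) ^ 3)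
    {t t' : ℕ} (ht' : t' ∈ Icc 1 T) (htt' : t < t') (hbig : (c * r t) ^ 3 < 2 * S t) :
    c * r t ≤ r t' := by
  rw [mem_Icc] at ht'
  obtain ⟨s, rfl⟩ : ∃ s, t' = s + 1 := ⟨t' - 1, by omega⟩
  have hsT : s < T := by omega
  have hSts : S t ≤ S s := hS (Set.mem_Iic.2 (by omega)) (Set.mem_Iic.2 hsT.le) (by omega)
  have hcr : 0 ≤ (c * r t) ^ 3 := pow_nonneg (mul_nonneg hc (hr t)) 3
  have hr1 : 0 ≤ r 1 ^ 3 := pow_nonneg (hr 1) 3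
  exact (pow_le_pow_iff_left₀ (mul_nonneg hc (hr t)) (hr _) three_ne_zero).1
    (by linarith [hgrow s hsT])

theorem sum_inv_filter_le_of_cubic_growth {c : ℝ} (hc : 1 < c) (hr : ∀ t, 0 ≤ r t)
    (hr1 : 0 < r 1) (hS : MonotoneOn S (Set.Iic T)) (hS0 : 0 ≤ S 0)
    (hgrow : ∀ t < T, r 1 ^ 3 + 3 * S t ≤ r (t + 1) ^ 3) :
    ∑ t ∈ Icc 1 T with (c * r t) ^ 3 < 2 * S t, (r t)⁻¹ ≤ c / (c - 1) / r 1 :=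
  sum_inv_le_of_lacunary hc hr1
    (fun t ht => le_of_cubic_growth hr hS hS0 hgrow (mem_filter.1 ht).1)
    (fun t ht t' ht' htt' => mul_le_of_cubic_growth (by linarith) hr hS hgrow
      (mem_filter.1 ht').1 htt' (mem_filter.1 ht).2)

end CubicGrowth

theorem sqrt_pow_three_add_sqrtWeightedSum_le_of_ruleTwo {T : ℕ} {z u h β : ℕ → ℝ}
    (hu : ∀ t ∈ Ico 1 T, 0 ≤ u t) (hh : ∀ t ∈ Ico 1 T, 0 < h t) (hβ1 : 0 < β 1)
    (hrule : ∀ t ∈ Ico 1 T, β (t + 1) = β t + 1 / h t * (2 * √(z t / β t) + u t / β t)) :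
    ∀ t < T, √(β 1) ^ 3 + 3 * sqrtWeightedSum z h t ≤ √(β (t + 1)) ^ 3 := by
  intro t
  induction t with
  | zero => simp
  | succ t ih =>
    intro ht
    have hS : 0 ≤ sqrtWeightedSum z h t :=
      sqrtWeightedSum_nonneg fun s hs => hh s (by simp only [mem_Icc, mem_Ico] at hs ⊢; omega)
    have hβ : 0 < β (t + 1) := by
      refine sqrt_pos.1 ((sqrt_pos.2 hβ1).trans_le ?_)
      exact (pow_le_pow_iff_left₀ (sqrt_nonneg _) (sqrt_nonneg _) three_ne_zero).1
        (by linarith [ih (by omega)])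
    have hmem : t + 1 ∈ Ico 1 T := mem_Ico.2 ⟨by omega, ht⟩
    rw [sqrtWeightedSum_succ, hrule (t + 1) hmem]
    linarith [ih (by omega),
      sqrt_pow_three_add_le_ruleTwo_step (z := z (t + 1)) hβ (hu _ hmem) (hh _ hmem)]

theorem sqrt_div_le_of_two_mul_le {z b h S c : ℝ} (hb : 0 < b) (hh : 0 < h) (hc : 0 < c)
    (hzS : √z / h ≤ S) (hS : 2 * S ≤ (c * √b) ^ 3) :
    √(z / b) ≤ c / 2 ^ ((1 : ℝ) / 3) * (√z / S ^ ((1 : ℝ) / 3)) := by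
  rw [sqrt_div' z hb.le]
  rcases (sqrt_nonneg z).eq_or_lt with hz0 | hzpos
  · simp [← hz0]
  have hSpos : 0 < S := (div_pos hzpos hh).trans_le hzS
  have hsb : 0 < √b := sqrt_pos.2 hb
  have hroot : (2 * S) ^ ((1 : ℝ) / 3) ≤ c * √b := by
    rw [one_div, rpow_inv_le_iff_of_pos (by positivity) (by positivity) (by norm_num)]
    exact_mod_cast hS
  calc √z / √b = c * √z / (c * √b) := (mul_div_mul_left _ _ hc.ne').symm
    _ ≤ c * √z / (2 * S) ^ ((1 : ℝ) / 3) :=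
      div_le_div_of_nonneg_left (by positivity) (by positivity) hroot
    _ = c / 2 ^ ((1 : ℝ) / 3) * (√z / S ^ ((1 : ℝ) / 3)) := by
      rw [mul_rpow (by norm_num) hSpos.le]
      ring

theorem sum_filter_sqrt_div_le_G1 {T : ℕ} {z h β : ℕ → ℝ} {c : ℝ} (hc : 0 < c)
    (hh : ∀ t ∈ Icc 1 T, 0 < h t) (hβ : ∀ t ∈ Icc 1 T, 0 < β t) :
    ∑ t ∈ Icc 1 T with 2 * sqrtWeightedSum z h t ≤ (c * √(β t)) ^ 3, √(z t / β t)
      ≤ c / 2 ^ ((1 : ℝ) / 3) * G1 T z h := by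
  have hh' : ∀ t ∈ Icc 1 T, ∀ s ∈ Icc 1 t, 0 < h s := fun t ht s hs =>
    hh s (by simp only [mem_Icc] at ht hs ⊢; omega)
  calc _ ≤ ∑ t ∈ Icc 1 T with 2 * sqrtWeightedSum z h t ≤ (c * √(β t)) ^ 3,
          c / 2 ^ ((1 : ℝ) / 3) * (√(z t) / sqrtWeightedSum z h t ^ ((1 : ℝ) / 3)) := by
        refine sum_le_sum fun t ht => ?_
        obtain ⟨ht, hsmall⟩ := mem_filter.1 ht
        exact sqrt_div_le_of_two_mul_le (hβ t ht) (hh t ht) hc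
          (div_le_sqrtWeightedSum (mem_Icc.1 ht).1 (hh' t ht)) hsmall
    _ ≤ ∑ t ∈ Icc 1 T,
          c / 2 ^ ((1 : ℝ) / 3) * (√(z t) / sqrtWeightedSum z h t ^ ((1 : ℝ) / 3)) := by
        refine sum_le_sum_of_subset_of_nonneg (filter_subset _ _) fun t ht _ => ?_
        have := sqrtWeightedSum_nonneg (z := z) (hh' t ht)
        positivity
    _ = c / 2 ^ ((1 : ℝ) / 3) * G1 T z h := by rw [G1_eq_sum, mul_sum]

theorem sum_filter_sqrt_div_le {T : ℕ} {z β S : ℕ → ℝ} {c zmax : ℝ} (hc : 1 < c)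
    (hβ1 : 0 < β 1) (hβ : ∀ t ∈ Icc 1 T, 0 < β t) (hz : ∀ t ∈ Icc 1 T, z t ≤ zmax)
    (hS : MonotoneOn S (Set.Iic T)) (hS0 : 0 ≤ S 0)
    (hgrow : ∀ t < T, √(β 1) ^ 3 + 3 * S t ≤ √(β (t + 1)) ^ 3) :
    ∑ t ∈ Icc 1 T with (c * √(β t)) ^ 3 < 2 * S t, √(z t / β t)
      ≤ c / (c - 1) * √(zmax / β 1) := by
  calc _ ≤ ∑ t ∈ Icc 1 T with (c * √(β t)) ^ 3 < 2 * S t, √zmax * (√(β t))⁻¹ := by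
        refine sum_le_sum fun t ht => ?_
        have ht := (mem_filter.1 ht).1
        rw [sqrt_div' _ (hβ t ht).le, ← div_eq_mul_inv]
        gcongr
        exact hz t ht
    _ = √zmax * ∑ t ∈ Icc 1 T with (c * √(β t)) ^ 3 < 2 * S t, (√(β t))⁻¹ := by
        rw [mul_sum]
    _ ≤ √zmax * (c / (c - 1) / √(β 1)) := by
        gcongr
        exact sum_inv_filter_le_of_cubic_growth (r := fun t => √(β t)) hc
          (fun _ => sqrt_nonneg _) (sqrt_pos.2 hβ1) hS hS0 hgrow
    _ = c / (c - 1) * √(zmax / β 1) := by rw [sqrt_div' _ hβ1.le]; ring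

theorem stmt_11_general (T : ℕ) (hT : 1 ≤ T) (z u : ℕ → ℝ) (hhat : ℕ → ℝ) (β : ℕ → ℝ)
    (hu : ∀ t ∈ Finset.Icc 1 T, 0 ≤ u t)
    (hhhat : ∀ t ∈ Finset.Icc 1 (T + 1), 0 < hhat t)
    (zmax : ℝ)
    (hzmax : zmax = (Finset.Icc 1 T).sup' (Finset.nonempty_Icc.mpr hT) z)
    (hβ1 : 0 < β 1)
    (hrule : ∀ t ∈ Finset.Icc 2 T,
      β t = β (t - 1)
        + (1 / hhat t) * (2 * Real.sqrt (z (t - 1) / β (t - 1)) + u (t - 1) / β (t - 1))) :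
    ∀ c : ℝ, 1 < c →
      ∑ t ∈ Finset.Icc 1 T, Real.sqrt (z t / β t)
        ≤ c / (2 : ℝ) ^ ((1 : ℝ) / 3) * G1 T z (fun s => hhat (s + 1))
          + c / (c - 1) * Real.sqrt (zmax / β 1) := by
  intro c hc
  set S := sqrtWeightedSum z fun s => hhat (s + 1)
  have hh : ∀ t ∈ Icc 1 T, 0 < hhat (t + 1) := fun t ht =>
    hhhat (t + 1) (by simp only [mem_Icc] at ht ⊢; omega)
  have hgrow : ∀ t < T, √(β 1) ^ 3 + 3 * S t ≤ √(β (t + 1)) ^ 3 :=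
    sqrt_pow_three_add_sqrtWeightedSum_le_of_ruleTwo (fun t ht => hu t (Ico_subset_Icc_self ht))
      (fun t ht => hh t (Ico_subset_Icc_self ht)) hβ1
      (fun t ht => by simpa using hrule (t + 1) (by simp only [mem_Ico, mem_Icc] at ht ⊢; omega))
  have hS : MonotoneOn S (Set.Iic T) := sqrtWeightedSum_monotoneOn hh
  have hS0 : 0 ≤ S 0 := sqrtWeightedSum_zero.ge
  have hβ : ∀ t ∈ Icc 1 T, 0 < β t := fun t ht => sqrt_pos.1 <| (sqrt_pos.2 hβ1).trans_le <|
    le_of_cubic_growth (r := fun t => √(β t)) (fun _ => sqrt_nonneg _) hS hS0 hgrow ht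
  rw [← sum_filter_add_sum_filter_not (Icc 1 T) fun t => 2 * S t ≤ (c * √(β t)) ^ 3]
  simp only [not_le]
  exact add_le_add (sum_filter_sqrt_div_le_G1 (by linarith) hh hβ)
    (sum_filter_sqrt_div_le hc hβ1 hβ (fun t ht => hzmax ▸ le_sup' z ht) hS hS0 hgrow)

theorem stmt_11 (T : ℕ) (hT : 1 ≤ T) (z u : ℕ → ℝ) (hhat : ℕ → ℝ) (β : ℕ → ℝ)
    (hz : ∀ t ∈ Finset.Icc 1 T, 0 ≤ z t)
    (hu : ∀ t ∈ Finset.Icc 1 T, 0 ≤ u t)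
    (hhhat : ∀ t ∈ Finset.Icc 1 (T + 1), 0 < hhat t)
    (zmax : ℝ)
    (hzmax : zmax = (Finset.Icc 1 T).sup' (Finset.nonempty_Icc.mpr hT) z)
    (hβ1 : 0 < β 1)
    (hrule : ∀ t ∈ Finset.Icc 2 T,
      β t = β (t - 1)
        + (1 / hhat t) * (2 * Real.sqrt (z (t - 1) / β (t - 1)) + u (t - 1) / β (t - 1))) :
    ∀ c : ℝ, 1 < c →
      ∑ t ∈ Finset.Icc 1 T, Real.sqrt (z t / β t)
        ≤ c / (2 : ℝ) ^ ((1 : ℝ) / 3) * G1 T z (fun s => hhat (s + 1))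
          + c / (c - 1) * Real.sqrt (zmax / β 1) :=
  stmt_11_general T hT z u hhat β hu hhhat zmax hzmax hβ1 hrule
end

section
/- Let T be a positive integer, let z_1,…,z_T ≥ 0 and u_1,…,u_T ≥ 0 be real sequences, let ĥ_1,…,ĥ_{T+1} > 0, and let u_max = max_{t∈[T]} u_t. Suppose (β_t)_{t=1}^T is given by Rule 2: β_1 > 0 is arbitrary and β_t = β_{t−1} + (1/ĥ_t)(2√(z_{t−1}/β_{t−1}) + u_{t−1}/β_{t−1}) for t = 2,…,T. Then for every c > 1, ∑_{t=1}^T u_t/β_t ≤ c · G2(u_{1:T}, ĥ_{2:T+1}) + (c/(c−1)) · u_max/β_1. -/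
open Finset

set_option maxHeartbeats 1600000 in
theorem stmt_12 (T : ℕ) (hT : 1 ≤ T) (z u : ℕ → ℝ) (hhat : ℕ → ℝ) (β : ℕ → ℝ)
    (hz : ∀ t ∈ Finset.Icc 1 T, 0 ≤ z t)
    (hu : ∀ t ∈ Finset.Icc 1 T, 0 ≤ u t)
    (hhhat : ∀ t ∈ Finset.Icc 1 (T + 1), 0 < hhat t)
    (umax : ℝ)
    (humax : umax = (Finset.Icc 1 T).sup' (Finset.nonempty_Icc.mpr hT) u)
    (hβ1 : 0 < β 1)
    (hrule : ∀ t ∈ Finset.Icc 2 T,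
      β t = β (t - 1)
        + (1 / hhat t) * (2 * Real.sqrt (z (t - 1) / β (t - 1)) + u (t - 1) / β (t - 1))) :
    ∀ c : ℝ, 1 < c →
      ∑ t ∈ Finset.Icc 1 T, u t / β t
        ≤ c * G2 T u (fun s => hhat (s + 1)) + c / (c - 1) * (umax / β 1) := by
  intro c hc
  have hc0 : (0:ℝ) < c := by linarith
  have hc1 : (0:ℝ) < c - 1 := by linarith
  have hK : (0:ℝ) ≤ c / (c - 1) := le_of_lt (div_pos hc0 hc1)
  set S : ℕ → ℝ := fun t => ∑ s ∈ Finset.Icc 1 t, u s / hhat (s + 1) with hSdef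
  have hS0 : S 0 = 0 := by simp [hSdef]
  have hSrec : ∀ n : ℕ, 1 ≤ n → S n = S (n - 1) + u n / hhat (n + 1) := by
    intro n hn
    obtain ⟨m, rfl⟩ : ∃ m, n = m + 1 := ⟨n - 1, by omega⟩
    simp only [hSdef, Nat.add_sub_cancel]
    exact Finset.sum_Icc_succ_top (by omega) _
  have hSnonneg : ∀ n, n ≤ T → 0 ≤ S n := by
    intro n hn
    apply Finset.sum_nonneg
    intro s hs
    simp only [Finset.mem_Icc] at hs
    exact div_nonneg (hu s (Finset.mem_Icc.mpr ⟨hs.1, hs.2.trans hn⟩))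
      (le_of_lt (hhhat (s + 1) (Finset.mem_Icc.mpr ⟨by omega, by omega⟩)))
  have humax_ge : ∀ t ∈ Finset.Icc 1 T, u t ≤ umax := by
    intro t ht; rw [humax]; exact Finset.le_sup' u ht
  have humax0 : 0 ≤ umax :=
    le_trans (hu 1 (Finset.mem_Icc.mpr ⟨le_refl 1, hT⟩))
      (humax_ge 1 (Finset.mem_Icc.mpr ⟨le_refl 1, hT⟩))
  -- key growth estimate for β
  have key : ∀ t, 1 ≤ t → t ≤ T → β 1 ≤ β t ∧ β 1 ^ 2 + 2 * S (t - 1) ≤ β t ^ 2 := by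
    intro t
    induction t with
    | zero => intro h; exact absurd h (by norm_num)
    | succ n ih =>
      intro _ hnT
      rcases Nat.eq_zero_or_pos n with hn0 | hn1
      · subst hn0
        refine ⟨le_refl _, ?_⟩
        simp [hS0]
      · obtain ⟨ih1, ih2⟩ := ih hn1 (by omega)
        have hβn : 0 < β n := lt_of_lt_of_le hβ1 ih1
        have hhn : 0 < hhat (n + 1) := hhhat (n + 1) (Finset.mem_Icc.mpr ⟨by omega, by omega⟩)
        have hzn : 0 ≤ z n := hz n (Finset.mem_Icc.mpr ⟨hn1, by omega⟩)
        have hun : 0 ≤ u n := hu n (Finset.mem_Icc.mpr ⟨hn1, by omega⟩)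
        have hr := hrule (n + 1) (Finset.mem_Icc.mpr ⟨by omega, hnT⟩)
        simp only [Nat.add_sub_cancel] at hr
        have hsq : 0 ≤ Real.sqrt (z n / β n) := Real.sqrt_nonneg _
        have heq : β n * (1 / hhat (n + 1) * (2 * Real.sqrt (z n / β n) + u n / β n))
            = 2 * β n * Real.sqrt (z n / β n) / hhat (n + 1) + u n / hhat (n + 1) := by
          field_simp
        have hfirst : 0 ≤ 2 * β n * Real.sqrt (z n / β n) / hhat (n + 1) := by positivity
        have hdelta : u n / hhat (n + 1)
            ≤ β n * (1 / hhat (n + 1) * (2 * Real.sqrt (z n / β n) + u n / β n)) := by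
          rw [heq]; linarith
        have hΔ0 : 0 ≤ 1 / hhat (n + 1) * (2 * Real.sqrt (z n / β n) + u n / β n) := by
          apply mul_nonneg (by positivity)
          have : 0 ≤ u n / β n := div_nonneg hun hβn.le
          linarith
        constructor
        · rw [hr]; linarith
        · simp only [Nat.add_sub_cancel]
          rw [hSrec n hn1, hr]
          nlinarith [sq_nonneg (1 / hhat (n + 1) * (2 * Real.sqrt (z n / β n) + u n / β n))]
  set φ : ℕ → ℝ := fun t => 1 / Real.sqrt (β 1 ^ 2 + 2 * S t) with hφdef
  have hφnonneg : ∀ n, 0 ≤ φ n := by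
    intro n; simp only [hφdef]; positivity
  have hφ0 : φ 0 = 1 / β 1 := by
    simp only [hφdef, hS0]
    rw [show β 1 ^ 2 + 2 * 0 = β 1 ^ 2 by ring, Real.sqrt_sq hβ1.le]
  have pointwise : ∀ t ∈ Finset.Icc 1 T,
      u t / β t ≤ c * (u t / Real.sqrt (S t)) + c / (c - 1) * umax * (φ (t - 1) - φ t) := by
    intro t ht
    simp only [Finset.mem_Icc] at ht
    obtain ⟨h1t, htT⟩ := ht
    obtain ⟨hβge, hβsq⟩ := key t h1t htT
    have hβt : 0 < β t := lt_of_lt_of_le hβ1 hβge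
    have hhn : 0 < hhat (t + 1) := hhhat (t + 1) (Finset.mem_Icc.mpr ⟨by omega, by omega⟩)
    have hut : 0 ≤ u t := hu t (Finset.mem_Icc.mpr ⟨h1t, htT⟩)
    have hutmax : u t ≤ umax := humax_ge t (Finset.mem_Icc.mpr ⟨h1t, htT⟩)
    have hSt1 : 0 ≤ S (t - 1) := hSnonneg (t - 1) (by omega)
    have hSt : 0 ≤ S t := hSnonneg t htT
    have hdiv0 : 0 ≤ u t / hhat (t + 1) := div_nonneg hut hhn.le
    have hStmono : S (t - 1) ≤ S t := by rw [hSrec t h1t]; linarith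
    have ha0 : 0 < Real.sqrt (β 1 ^ 2 + 2 * S (t - 1)) := Real.sqrt_pos.mpr (by nlinarith)
    have hb0 : 0 < Real.sqrt (β 1 ^ 2 + 2 * S t) := Real.sqrt_pos.mpr (by nlinarith)
    have hab : Real.sqrt (β 1 ^ 2 + 2 * S (t - 1)) ≤ Real.sqrt (β 1 ^ 2 + 2 * S t) :=
      Real.sqrt_le_sqrt (by linarith)
    have haβ : Real.sqrt (β 1 ^ 2 + 2 * S (t - 1)) ≤ β t := by
      have := Real.sqrt_le_sqrt hβsq
      rwa [Real.sqrt_sq hβt.le] at this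
    have hsb : Real.sqrt (S t) ≤ Real.sqrt (β 1 ^ 2 + 2 * S t) :=
      Real.sqrt_le_sqrt (by nlinarith)
    have hφt1 : φ (t - 1) = 1 / Real.sqrt (β 1 ^ 2 + 2 * S (t - 1)) := rfl
    have hφt : φ t = 1 / Real.sqrt (β 1 ^ 2 + 2 * S t) := rfl
    have hφdiff : 0 ≤ φ (t - 1) - φ t := by
      rw [hφt1, hφt]
      have := one_div_le_one_div_of_le ha0 hab
      linarith
    by_cases hcase : Real.sqrt (S t) ≤ c * β t
    · have h2 : 0 ≤ c / (c - 1) * umax * (φ (t - 1) - φ t) :=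
        mul_nonneg (mul_nonneg hK humax0) hφdiff
      have h1 : u t / β t ≤ c * (u t / Real.sqrt (S t)) := by
        rcases eq_or_lt_of_le hSt with hS0' | hSpos
        · have h5 : u t / hhat (t + 1) = 0 := by
            have h6 := hSrec t h1t
            have : S t = 0 := hS0'.symm
            linarith
          have hut0 : u t = 0 := by
            rcases div_eq_zero_iff.mp h5 with h | h
            · exact h
            · exact absurd h hhn.ne'
          simp [hut0]
        · have hspos : 0 < Real.sqrt (S t) := Real.sqrt_pos.mpr hSpos
          rw [← mul_div_assoc, div_le_div_iff₀ hβt hspos]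
          calc u t * Real.sqrt (S t) ≤ u t * (c * β t) := mul_le_mul_of_nonneg_left hcase hut
            _ = c * u t * β t := by ring
      linarith
    · push_neg at hcase
      have h1 : 0 ≤ c * (u t / Real.sqrt (S t)) :=
        mul_nonneg hc0.le (div_nonneg hut (Real.sqrt_nonneg _))
      have hca : c * Real.sqrt (β 1 ^ 2 + 2 * S (t - 1)) < Real.sqrt (S t) :=
        lt_of_le_of_lt (mul_le_mul_of_nonneg_left haβ hc0.le) hcase
      have hcb : c * Real.sqrt (β 1 ^ 2 + 2 * S (t - 1)) < Real.sqrt (β 1 ^ 2 + 2 * S t) :=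
        lt_of_lt_of_le hca hsb
      have h2 : (c - 1) / (c * Real.sqrt (β 1 ^ 2 + 2 * S (t - 1))) ≤ φ (t - 1) - φ t := by
        rw [hφt1, hφt]
        have hpos : 0 < c * Real.sqrt (β 1 ^ 2 + 2 * S (t - 1)) := by positivity
        have h7 : 1 / Real.sqrt (β 1 ^ 2 + 2 * S t)
            ≤ 1 / (c * Real.sqrt (β 1 ^ 2 + 2 * S (t - 1))) :=
          one_div_le_one_div_of_le hpos hcb.le
        have h8 : (c - 1) / (c * Real.sqrt (β 1 ^ 2 + 2 * S (t - 1)))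
            = 1 / Real.sqrt (β 1 ^ 2 + 2 * S (t - 1))
              - 1 / (c * Real.sqrt (β 1 ^ 2 + 2 * S (t - 1))) := by
          field_simp
        linarith
      have h3 : u t / β t ≤ umax / Real.sqrt (β 1 ^ 2 + 2 * S (t - 1)) :=
        div_le_div₀ humax0 hutmax ha0 haβ
      have h4 : umax / Real.sqrt (β 1 ^ 2 + 2 * S (t - 1))
          = c / (c - 1) * umax * ((c - 1) / (c * Real.sqrt (β 1 ^ 2 + 2 * S (t - 1)))) := by
        field_simp
      have h5 : c / (c - 1) * umax * ((c - 1) / (c * Real.sqrt (β 1 ^ 2 + 2 * S (t - 1))))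
          ≤ c / (c - 1) * umax * (φ (t - 1) - φ t) :=
        mul_le_mul_of_nonneg_left h2 (mul_nonneg hK humax0)
      linarith
  have tele : ∀ n : ℕ, ∑ t ∈ Finset.Icc 1 n, (φ (t - 1) - φ t) = φ 0 - φ n := by
    intro n
    induction n with
    | zero => simp
    | succ m ih =>
      rw [Finset.sum_Icc_succ_top (by omega), ih]
      simp only [Nat.add_sub_cancel]
      ring
  have hG2 : G2 T u (fun s => hhat (s + 1)) = ∑ t ∈ Finset.Icc 1 T, u t / Real.sqrt (S t) := by
    simp only [G2, hSdef]
  calc ∑ t ∈ Finset.Icc 1 T, u t / β t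
      ≤ ∑ t ∈ Finset.Icc 1 T,
          (c * (u t / Real.sqrt (S t)) + c / (c - 1) * umax * (φ (t - 1) - φ t)) :=
        Finset.sum_le_sum pointwise
    _ = c * ∑ t ∈ Finset.Icc 1 T, u t / Real.sqrt (S t)
        + c / (c - 1) * umax * ∑ t ∈ Finset.Icc 1 T, (φ (t - 1) - φ t) := by
        rw [Finset.sum_add_distrib, Finset.mul_sum, Finset.mul_sum]
    _ = c * G2 T u (fun s => hhat (s + 1)) + c / (c - 1) * umax * (φ 0 - φ T) := by
        rw [tele T, hG2]
    _ ≤ c * G2 T u (fun s => hhat (s + 1)) + c / (c - 1) * (umax / β 1) := by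
        have h6 : 0 ≤ c / (c - 1) * umax * φ T := mul_nonneg (mul_nonneg hK humax0) (hφnonneg T)
        have h7 : c / (c - 1) * umax * (φ 0 - φ T)
            = c / (c - 1) * (umax / β 1) - c / (c - 1) * umax * φ T := by
          rw [hφ0]; ring
        linarith
end

section
/- Let k ≥ 2 be an integer, let α ∈ (0,1), let q ∈ P_k be a point of the probability simplex, and let i* ∈ {1,…,k}. Then H_α(q) = (1/α) ∑_{i=1}^k (q_i^α − q_i) ≤ (1/α) (k−1)^{1−α} (1 − q_{i*})^α. -/
open Finset

theorem stmt_13 (k : ℕ) (hk : 2 ≤ k) (α : ℝ) (hα : α ∈ Set.Ioo (0 : ℝ) 1)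
    (q : Fin k → ℝ) (hq0 : ∀ i, 0 ≤ q i) (hq1 : ∑ i, q i = 1) (istar : Fin k) :
    (1 / α) * ∑ i, (q i ^ α - q i)
      ≤ (1 / α) * ((k : ℝ) - 1) ^ (1 - α) * (1 - q istar) ^ α := by
  obtain ⟨hα0, hα1⟩ := hα
  set s : Finset (Fin k) := Finset.univ.erase istar with hs
  have hcard : (#s : ℝ) = (k : ℝ) - 1 := by
    simp [hs, Finset.card_erase_of_mem, Nat.cast_sub (by omega : 1 ≤ k)]
  have hsum : ∑ i ∈ s, q i = 1 - q istar := by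
    have := Finset.add_sum_erase Finset.univ q (Finset.mem_univ istar)
    rw [hq1] at this; linarith
  have hS0 : (0 : ℝ) ≤ 1 - q istar := by
    rw [← hsum]; exact Finset.sum_nonneg fun i _ => hq0 i
  have hqle1 : q istar ≤ 1 := by linarith
  -- key: ∑_{i∈s} (q i)^α ≤ (#s)^(1-α) * (1 - q istar)^α
  have key : ∑ i ∈ s, q i ^ α ≤ ((k : ℝ) - 1) ^ (1 - α) * (1 - q istar) ^ α := by
    have hp : (1 : ℝ) ≤ 1 / α := (one_le_div hα0).2 hα1.le
    have H := Real.rpow_sum_le_const_mul_sum_rpow_of_nonneg s (f := fun i => q i ^ α) hp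
      (fun i _ => Real.rpow_nonneg (hq0 i) α)
    have hsimp : ∀ i ∈ s, (q i ^ α) ^ (1 / α : ℝ) = q i := by
      intro i _
      rw [← Real.rpow_mul (hq0 i), mul_one_div, div_self hα0.ne', Real.rpow_one]
    rw [Finset.sum_congr rfl hsimp, hsum] at H
    have hA0 : (0 : ℝ) ≤ ∑ i ∈ s, q i ^ α :=
      Finset.sum_nonneg fun i _ => Real.rpow_nonneg (hq0 i) α
    have hcard0 : (0 : ℝ) ≤ (#s : ℝ) ^ (1 / α - 1) := Real.rpow_nonneg (by positivity) _
    have H2 : ((∑ i ∈ s, q i ^ α) ^ (1 / α : ℝ)) ^ α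
        ≤ ((#s : ℝ) ^ (1 / α - 1) * (1 - q istar)) ^ α :=
      Real.rpow_le_rpow (Real.rpow_nonneg hA0 _) H hα0.le
    rw [← Real.rpow_mul hA0, one_div_mul_cancel hα0.ne', Real.rpow_one,
      Real.mul_rpow hcard0 hS0, ← Real.rpow_mul (by positivity), sub_mul,
      one_div_mul_cancel hα0.ne', one_mul, hcard] at H2
    exact H2
  have hsplit : ∑ i, (q i ^ α - q i)
      = (q istar ^ α - q istar) + ∑ i ∈ s, (q i ^ α - q i) := by
    exact (Finset.add_sum_erase Finset.univ _ (Finset.mem_univ istar)).symm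
  have hsum2 : ∑ i ∈ s, (q i ^ α - q i) = (∑ i ∈ s, q i ^ α) - (1 - q istar) := by
    rw [Finset.sum_sub_distrib, hsum]
  have hq1le : q istar ^ α ≤ 1 := Real.rpow_le_one (hq0 istar) hqle1 hα0.le
  have main : ∑ i, (q i ^ α - q i) ≤ ((k : ℝ) - 1) ^ (1 - α) * (1 - q istar) ^ α := by
    rw [hsplit, hsum2]; linarith
  calc (1 / α) * ∑ i, (q i ^ α - q i)
      ≤ (1 / α) * (((k : ℝ) - 1) ^ (1 - α) * (1 - q istar) ^ α) :=
        mul_le_mul_of_nonneg_left main (by positivity)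
    _ = (1 / α) * ((k : ℝ) - 1) ^ (1 - α) * (1 - q istar) ^ α := by ring
end

section
/- Let k ≥ 2 be an integer, let α ∈ (0,1), let q ∈ P_k be a point of the probability simplex, let Ĩ ∈ {1,…,k} satisfy q_Ĩ = max_{i∈[k]} q_i, and set q_* = min{q_Ĩ, 1 − q_Ĩ}. Then H_α(q) ≥ ((1 − (1/2)^{1−α})/α) · q_*^α ≥ ((1−α)/(4α)) · q_*^α. -/
open Finset

theorem stmt_14 (k : ℕ) (hk : 2 ≤ k) (α : ℝ) (hα : α ∈ Set.Ioo (0 : ℝ) 1)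
    (q : Fin k → ℝ) (hq0 : ∀ i, 0 ≤ q i) (hq1 : ∑ i, q i = 1)
    (Itil : Fin k) (hItil : ∀ i, q i ≤ q Itil) :
    (1 / α) * ∑ i, (q i ^ α - q i)
        ≥ ((1 - (1 / 2 : ℝ) ^ (1 - α)) / α) * min (q Itil) (1 - q Itil) ^ α ∧
    ((1 - (1 / 2 : ℝ) ^ (1 - α)) / α) * min (q Itil) (1 - q Itil) ^ α
        ≥ ((1 - α) / (4 * α)) * min (q Itil) (1 - q Itil) ^ α := by
  obtain ⟨hα0, hα1⟩ := hα
  have hqle1 : ∀ i, q i ≤ 1 := by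
    intro i
    calc q i ≤ ∑ j, q j := Finset.single_le_sum (fun j _ => hq0 j) (mem_univ i)
    _ = 1 := hq1
  have hterm : ∀ i, 0 ≤ q i ^ α - q i := by
    intro i
    rcases eq_or_lt_of_le (hq0 i) with h | h
    · simp [← h, Real.zero_rpow hα0.ne']
    · have := Real.rpow_le_rpow_of_exponent_ge h (hqle1 i) hα1.le
      rw [Real.rpow_one] at this
      linarith
  set M := q Itil with hMdef
  set m := min M (1 - M) with hmdef
  have hM0 : 0 ≤ M := hq0 Itil
  have hM1 : M ≤ 1 := hqle1 Itil
  have hm0 : 0 ≤ m := le_min hM0 (by linarith)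
  have hmhalf : m ≤ 1 / 2 := by
    rcases le_total M (1 / 2) with h | h
    · exact le_trans (min_le_left _ _) h
    · exact le_trans (min_le_right _ _) (by linarith)
  have hma0 : 0 ≤ m ^ α := Real.rpow_nonneg hm0 α
  -- key : m^α - m ≤ sum
  have key : m ^ α - m ≤ ∑ i, (q i ^ α - q i) := by
    rcases le_or_gt M (1 / 2) with h | h
    · have hm : m = M := min_eq_left (by linarith)
      rw [hm]
      exact Finset.single_le_sum (f := fun i => q i ^ α - q i)
        (fun j _ => hterm j) (mem_univ Itil)
    · have hm : m = 1 - M := min_eq_right (by linarith)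
      rcases eq_or_lt_of_le (by linarith : M ≤ 1) with hM1' | hM1'
      · have : m = 0 := by rw [hm, hM1']; ring
        rw [this, Real.zero_rpow hα0.ne', sub_zero]
        exact Finset.sum_nonneg fun i _ => hterm i
      · -- 1 - M > 0
        have h1M : 0 < 1 - M := by linarith
        have hS : ∑ i ∈ univ.erase Itil, q i = 1 - M := by
          have := Finset.sum_erase_add univ q (mem_univ Itil)
          rw [hq1] at this
          linarith [this]
        have hle1M : ∀ i ∈ univ.erase Itil, q i ≤ 1 - M := by
          intro i hi
          rw [← hS]
          exact Finset.single_le_sum (fun j _ => hq0 j) hi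
        have hsub : ∀ i ∈ univ.erase Itil, q i * (1 - M) ^ (α - 1) ≤ q i ^ α := by
          intro i hi
          rcases eq_or_lt_of_le (hq0 i) with h0 | h0
          · rw [← h0, Real.zero_rpow hα0.ne', zero_mul]
          · have h1 : (1 - M) ^ (α - 1) ≤ q i ^ (α - 1) :=
              Real.rpow_le_rpow_of_nonpos h0 (hle1M i hi) (by linarith)
            have h2 : q i ^ α = q i * q i ^ (α - 1) := by
              rw [← Real.rpow_one_add' (by positivity) (by intro hc; linarith [hc])]
              ring_nf
            rw [h2]
            exact mul_le_mul_of_nonneg_left h1 (hq0 i)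
        have hsum : (1 - M) ^ α ≤ ∑ i ∈ univ.erase Itil, q i ^ α := by
          have h3 : (1 - M) ^ α = (1 - M) * (1 - M) ^ (α - 1) := by
            rw [← Real.rpow_one_add' (le_of_lt h1M) (by intro hc; linarith [hc])]
            ring_nf
          calc (1 - M) ^ α = (∑ i ∈ univ.erase Itil, q i) * (1 - M) ^ (α - 1) := by
                rw [hS, h3]
          _ = ∑ i ∈ univ.erase Itil, q i * (1 - M) ^ (α - 1) := by
                rw [Finset.sum_mul]
          _ ≤ ∑ i ∈ univ.erase Itil, q i ^ α := Finset.sum_le_sum hsub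
        have hsplit : ∑ i, (q i ^ α - q i)
            = (∑ i ∈ univ.erase Itil, (q i ^ α - q i)) + (M ^ α - M) :=
          (Finset.sum_erase_add univ _ (mem_univ Itil)).symm
        have hMt : 0 ≤ M ^ α - M := hterm Itil
        have : ∑ i ∈ univ.erase Itil, (q i ^ α - q i)
            = (∑ i ∈ univ.erase Itil, q i ^ α) - (1 - M) := by
          rw [Finset.sum_sub_distrib, hS]
        rw [hsplit, this, hm]
        linarith
  -- m ≤ m^α * (1/2)^(1-α)
  have hc1 : (1 / 2 : ℝ) ^ (1 - α) ≤ 1 :=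
    Real.rpow_le_one (by norm_num) (by norm_num) (by linarith)
  have key2 : m ≤ m ^ α * (1 / 2 : ℝ) ^ (1 - α) := by
    rcases eq_or_lt_of_le hm0 with h0 | h0
    · rw [← h0, Real.zero_rpow hα0.ne', zero_mul]
    · have h1 : m = m ^ α * m ^ (1 - α) := by
        rw [← Real.rpow_add h0, show α + (1 - α) = 1 by ring, Real.rpow_one]
      refine h1.trans_le ?_
      exact mul_le_mul_of_nonneg_left
        (Real.rpow_le_rpow (z := 1 - α) hm0 hmhalf (by linarith)) hma0
  have hineq1 : (1 - (1 / 2 : ℝ) ^ (1 - α)) * m ^ α ≤ ∑ i, (q i ^ α - q i) := by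
    nlinarith [key, key2]
  have hαinv : 0 < 1 / α := by positivity
  constructor
  · have := mul_le_mul_of_nonneg_left hineq1 hαinv.le
    calc ((1 - (1 / 2 : ℝ) ^ (1 - α)) / α) * m ^ α
        = (1 / α) * ((1 - (1 / 2 : ℝ) ^ (1 - α)) * m ^ α) := by ring
    _ ≤ (1 / α) * ∑ i, (q i ^ α - q i) := this
  · -- second inequality
    have hL : (0.6931471803 : ℝ) < Real.log 2 := Real.log_two_gt_d9
    have hexp : 1 + (1 - α) * Real.log 2 ≤ Real.exp ((1 - α) * Real.log 2) := by
      linarith [Real.add_one_le_exp ((1 - α) * Real.log 2)]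
    have hE : (1 / 2 : ℝ) ^ (1 - α) = (Real.exp ((1 - α) * Real.log 2))⁻¹ := by
      rw [show (1 / 2 : ℝ) = 2⁻¹ by norm_num,
        Real.inv_rpow (by norm_num), Real.rpow_def_of_pos (by norm_num : (0:ℝ) < 2)]
      rw [mul_comm]
    have hpos : 0 < 1 + (1 - α) * Real.log 2 := by nlinarith
    have hbound : (1 / 2 : ℝ) ^ (1 - α) ≤ (1 + (1 - α) * Real.log 2)⁻¹ := by
      rw [hE]
      exact inv_anti₀ hpos hexp
    have hfinal : (1 / 2 : ℝ) ^ (1 - α) ≤ 1 - (1 - α) / 4 := by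
      refine hbound.trans ?_
      rw [inv_le_iff_one_le_mul₀ hpos]
      have key3 : 0 ≤ (1 - α) * ((4 - (1 - α)) * Real.log 2 - 1) :=
        mul_nonneg (by linarith) (by nlinarith)
      nlinarith [key3]
    have h4 : (1 - α) / 4 ≤ 1 - (1 / 2 : ℝ) ^ (1 - α) := by linarith
    have : (1 - α) / (4 * α) ≤ (1 - (1 / 2 : ℝ) ^ (1 - α)) / α := by
      rw [div_le_div_iff₀ (by positivity) hα0]
      nlinarith
    exact mul_le_mul_of_nonneg_right this hma0
end

section
/- Let k ≥ 2 be an integer, let α ∈ (0,1), let c > 0, let q ∈ P_k be a point of the probability simplex, let Ĩ ∈ {1,…,k} satisfy q_Ĩ = max_{i∈[k]} q_i, set q_* = min{q_Ĩ, 1 − q_Ĩ}, and let a* ∈ {1,…,k} be arbitrary. Define z = (4c²/(1−α)) (∑_{i≠Ĩ} q_i^{2−α} + q_*^{2−α}) and h = H_α(q). Then z · h ≤ (8 c² (k−1)^{1−α} / (α(1−α))) · (1 − q_{a*})². -/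
open Finset

theorem stmt_16 (k : ℕ) (hk : 2 ≤ k) (α : ℝ) (hα : α ∈ Set.Ioo (0 : ℝ) 1)
    (c : ℝ) (hc : 0 < c)
    (q : Fin k → ℝ) (hq0 : ∀ i, 0 ≤ q i) (hq1 : ∑ i, q i = 1)
    (Itil : Fin k) (hItil : ∀ i, q i ≤ q Itil) (astar : Fin k) :
    (4 * c ^ 2 / (1 - α)
        * (∑ i ∈ Finset.univ.erase Itil, q i ^ (2 - α) + min (q Itil) (1 - q Itil) ^ (2 - α)))
      * ((1 / α) * ∑ i, (q i ^ α - q i))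
      ≤ 8 * c ^ 2 * ((k : ℝ) - 1) ^ (1 - α) / (α * (1 - α)) * (1 - q astar) ^ 2 := by
  obtain ⟨hα0, hα1⟩ := hα
  set E := Finset.univ.erase Itil with hE
  set s : ℝ := ∑ i ∈ E, q i with hs_def
  have hsum : q Itil + s = 1 := by
    rw [hs_def, hE, Finset.add_sum_erase _ _ (Finset.mem_univ Itil)]; exact hq1
  have hs0 : 0 ≤ s := Finset.sum_nonneg fun i _ => hq0 i
  have hqle : ∀ i, q i ≤ 1 := by
    intro i
    have h := Finset.single_le_sum (f := q) (fun j _ => hq0 j) (Finset.mem_univ i)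
    rw [hq1] at h; exact h
  have hs1 : 1 - q Itil = s := by linarith
  have hqi_le_s : ∀ i ∈ E, q i ≤ s := fun i hi =>
    Finset.single_le_sum (f := q) (fun j _ => hq0 j) hi
  -- A bound
  have hA1 : ∑ i ∈ E, q i ^ (2 - α) ≤ s ^ (2 - α) := by
    calc ∑ i ∈ E, q i ^ (2 - α) ≤ ∑ i ∈ E, s ^ (1 - α) * q i := by
          refine Finset.sum_le_sum fun i hi => ?_
          have h1 : q i ^ (2 - α) = q i ^ (1 - α) * q i := by
            rw [show (2:ℝ) - α = (1 - α) + 1 by ring,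
              Real.rpow_add' (hq0 i) (ne_of_gt (by linarith : (0:ℝ) < 1 - α + 1)), Real.rpow_one]
          rw [h1]
          exact mul_le_mul_of_nonneg_right
            (Real.rpow_le_rpow (hq0 i) (hqi_le_s i hi) (by linarith)) (hq0 i)
      _ = s ^ (1 - α) * s := by rw [← Finset.mul_sum]
      _ = s ^ (2 - α) := by
          rw [show (2:ℝ) - α = (1 - α) + 1 by ring,
            Real.rpow_add' hs0 (ne_of_gt (by linarith : (0:ℝ) < 1 - α + 1)), Real.rpow_one]
  have hmin : min (q Itil) (1 - q Itil) ^ (2 - α) ≤ s ^ (2 - α) := by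
    refine Real.rpow_le_rpow (le_min (hq0 Itil) (by linarith)) ?_ (by linarith)
    rw [hs1] at *
    exact min_le_right _ _
  -- B bound (power mean)
  have hcard : (E.card : ℝ) = (k : ℝ) - 1 := by
    rw [hE, Finset.card_erase_of_mem (Finset.mem_univ Itil), Finset.card_univ, Fintype.card_fin]
    have : 1 ≤ k := by omega
    push_cast [Nat.cast_sub this]
    ring
  have hK0 : (0:ℝ) ≤ ((k : ℝ) - 1) ^ (1 - α) := Real.rpow_nonneg (by
    have : (2:ℝ) ≤ (k:ℝ) := by exact_mod_cast hk
    linarith) _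
  have hp : (1:ℝ) ≤ 1/α := by rw [le_div_iff₀ hα0]; linarith
  have hB : ∑ i ∈ E, q i ^ α ≤ ((k : ℝ) - 1) ^ (1 - α) * s ^ α := by
    have hB0 := Real.inner_le_weight_mul_Lp_of_nonneg E hp (fun _ => (1:ℝ))
      (fun i => q i ^ α) (fun _ => zero_le_one) (fun i => Real.rpow_nonneg (hq0 i) α)
    simp only [one_mul] at hB0
    have hexp : ∀ i, (q i ^ α) ^ (1/α : ℝ) = q i := fun i => by
      rw [← Real.rpow_mul (hq0 i), mul_one_div_cancel (ne_of_gt hα0), Real.rpow_one]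
    simp only [hexp, Finset.sum_const, nsmul_eq_mul, mul_one] at hB0
    rw [hcard, one_div, inv_inv] at hB0
    exact hB0
  -- Entropy bound
  have hH : ∑ i, (q i ^ α - q i) ≤ ((k : ℝ) - 1) ^ (1 - α) * s ^ α := by
    rw [Finset.sum_sub_distrib, hq1]
    have hsplit : ∑ i, q i ^ α = q Itil ^ α + ∑ i ∈ E, q i ^ α :=
      (Finset.add_sum_erase _ _ (Finset.mem_univ Itil)).symm
    have hI : q Itil ^ α ≤ 1 := Real.rpow_le_one (hq0 _) (hqle _) (le_of_lt hα0)
    linarith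
  -- nonnegativity of entropy
  have hH0 : (0:ℝ) ≤ ∑ i, (q i ^ α - q i) := by
    refine Finset.sum_nonneg fun i _ => sub_nonneg.2 ?_
    rcases eq_or_lt_of_le (hq0 i) with h | h
    · rw [← h, Real.zero_rpow (ne_of_gt hα0)]
    · calc q i = q i ^ (1:ℝ) := (Real.rpow_one _).symm
        _ ≤ q i ^ α := Real.rpow_le_rpow_of_exponent_ge h (hqle i) (le_of_lt hα1)
  have hA0 : (0:ℝ) ≤ ∑ i ∈ E, q i ^ (2 - α) + min (q Itil) (1 - q Itil) ^ (2 - α) := by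
    have := Real.rpow_nonneg (le_min (hq0 Itil) (by linarith : (0:ℝ) ≤ 1 - q Itil)) (2 - α)
    have h2 : (0:ℝ) ≤ ∑ i ∈ E, q i ^ (2 - α) :=
      Finset.sum_nonneg fun i _ => Real.rpow_nonneg (hq0 i) _
    linarith
  -- combine
  have hs2 : s ^ (2 - α) * s ^ α = s ^ 2 := by
    rw [← Real.rpow_natCast s 2, ← Real.rpow_add' hs0 (by norm_num)]
    norm_num
  have key : (∑ i ∈ E, q i ^ (2 - α) + min (q Itil) (1 - q Itil) ^ (2 - α))
      * (∑ i, (q i ^ α - q i)) ≤ 2 * ((k : ℝ) - 1) ^ (1 - α) * s ^ 2 := by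
    have h1 : (∑ i ∈ E, q i ^ (2 - α) + min (q Itil) (1 - q Itil) ^ (2 - α))
        * (∑ i, (q i ^ α - q i)) ≤ (2 * s ^ (2 - α)) * (((k : ℝ) - 1) ^ (1 - α) * s ^ α) := by
      refine mul_le_mul (by linarith) hH hH0 ?_
      have := Real.rpow_nonneg hs0 (2 - α)
      linarith
    calc _ ≤ (2 * s ^ (2 - α)) * (((k : ℝ) - 1) ^ (1 - α) * s ^ α) := h1
      _ = 2 * ((k : ℝ) - 1) ^ (1 - α) * (s ^ (2 - α) * s ^ α) := by ring
      _ = 2 * ((k : ℝ) - 1) ^ (1 - α) * s ^ 2 := by rw [hs2]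
  have hfin : s ^ 2 ≤ (1 - q astar) ^ 2 := by
    refine pow_le_pow_left₀ hs0 ?_ 2
    have := hItil astar
    linarith
  have hc1 : (0:ℝ) < 1 - α := by linarith
  calc (4 * c ^ 2 / (1 - α)
        * (∑ i ∈ E, q i ^ (2 - α) + min (q Itil) (1 - q Itil) ^ (2 - α)))
      * ((1 / α) * ∑ i, (q i ^ α - q i))
      = 4 * c ^ 2 / ((1 - α) * α)
        * ((∑ i ∈ E, q i ^ (2 - α) + min (q Itil) (1 - q Itil) ^ (2 - α))
          * (∑ i, (q i ^ α - q i))) := by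
        field_simp
    _ ≤ 4 * c ^ 2 / ((1 - α) * α) * (2 * ((k : ℝ) - 1) ^ (1 - α) * s ^ 2) := by
        refine mul_le_mul_of_nonneg_left key (le_of_lt ?_)
        positivity
    _ = 8 * c ^ 2 * ((k : ℝ) - 1) ^ (1 - α) / (α * (1 - α)) * s ^ 2 := by
        field_simp
        ring
    _ ≤ 8 * c ^ 2 * ((k : ℝ) - 1) ^ (1 - α) / (α * (1 - α)) * (1 - q astar) ^ 2 := by
        have hk2 : (2:ℝ) ≤ (k:ℝ) := by exact_mod_cast hk
        have hKpos : (0:ℝ) < ((k:ℝ) - 1) ^ (1 - α) := Real.rpow_pos_of_pos (by linarith) _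
        exact mul_le_mul_of_nonneg_left hfin (le_of_lt (div_pos
          (mul_pos (by positivity : (0:ℝ) < 8 * c ^ 2) hKpos) (mul_pos hα0 hc1)))
end
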